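/- arXiv:2510.11428 — 12 statements merged into one kernel-verified Lean document; each statement's English description precedes it below -/
import Mathlib

section
/- Let n, m be natural numbers with 1 ≤ m ≤ n and 2m ≥ n, and let h_{n,m}(r) = (r − 1/2)(1 − r)^m r^{n−m} for real r. Then for r in the open interval (1/2, 1), the derivative of h_{n,m} vanishes at r if and only if r = r_max, where r_max = (3n − 2m + 2 + √((2m − n)² + 4(n + 1))) / (4(n + 1)). Equivalently, on (1/2, 1) the critical points of h_{n,m} are exactly the roots of the quadratic (2n + 2)r² + (2m − 3n − 2)r + (n − m) = 0 that lie in (1/2, 1), and r_max is the unique such root. -/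
/-- For naturals `n`, `m` with `1 ≤ m ≤ n` and `2m ≥ n`, and
`h r = (r − 1/2)(1 − r)^m r^(n−m)`, the derivative of `h` at a point
`r ∈ (1/2, 1)` vanishes if and only if `r = r_max`, where
`r_max = (3n − 2m + 2 + √((2m − n)² + 4(n + 1))) / (4(n + 1))`. -/
theorem stmt_1 (n m : ℕ) (hm : 1 ≤ m) (hmn : m ≤ n) (h2m : n ≤ 2 * m)
    (r : ℝ) (hr : r ∈ Set.Ioo (1/2 : ℝ) 1) :
    deriv (fun r : ℝ => (r - 1/2) * (1 - r) ^ m * r ^ (n - m)) r = 0 ↔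
      r = (3 * (n : ℝ) - 2 * (m : ℝ) + 2 +
            Real.sqrt ((2 * (m : ℝ) - (n : ℝ)) ^ 2 + 4 * ((n : ℝ) + 1))) /
          (4 * ((n : ℝ) + 1)) := by
  obtain ⟨hr1, hr2⟩ := hr
  obtain ⟨a, rfl⟩ : ∃ a, m = a + 1 := ⟨m - 1, by omega⟩
  obtain ⟨k, rfl⟩ : ∃ k, n = (a + 1) + k := ⟨n - (a + 1), by omega⟩
  have hk : (a + 1) + k - (a + 1) = k := by omega
  have hr0 : (0:ℝ) < r := by linarith
  have h1r : (0:ℝ) < 1 - r := by linarith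
  have hd : HasDerivAt (fun r : ℝ => (r - 1/2) * (1 - r) ^ (a+1) * r ^ k)
      ((((1:ℝ))*(1-r)^(a+1) + (r - 1/2)*(((a:ℝ)+1) * (1-r)^a * (-1))) * r ^ k
        + (r - 1/2) * (1-r)^(a+1) * ((k:ℝ) * r^(k-1))) r := by
    have h1 : HasDerivAt (fun x : ℝ => x - 1/2) 1 r := (hasDerivAt_id r).sub_const _
    have h2 : HasDerivAt (fun x : ℝ => (1 - x)^(a+1)) (((a:ℝ)+1) * (1-r)^a * (-1)) r := by
      have := (((hasDerivAt_id r).const_sub 1).pow (a+1))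
      exact this.congr_deriv (by simp)
    have h3 := hasDerivAt_pow k r
    have := (h1.mul h2).mul h3
    exact this.congr_deriv (by simp)
  simp only [hk]
  rw [hd.deriv]
  push_cast
  set A := (a:ℝ) with hA
  set K := (k:ℝ) with hK
  have hA0 : (0:ℝ) ≤ A := Nat.cast_nonneg a
  have hK0 : (0:ℝ) ≤ K := Nat.cast_nonneg k
  -- D and sqrt
  set D : ℝ := (2 * (A + 1) - (A + 1 + K)) ^ 2 + 4 * ((A + 1 + K) + 1) with hD
  have hD0 : 0 ≤ D := by positivity
  set s := Real.sqrt D with hs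
  have hs2 : s ^ 2 = D := Real.sq_sqrt hD0
  have hs0 : 0 ≤ s := Real.sqrt_nonneg _
  have hN : (0:ℝ) < A + 1 + K + 1 := by linarith
  -- key factorization of E * r
  set E := (((1:ℝ))*(1-r)^(a+1) + (r - 1/2)*((A+1) * (1-r)^a * (-1))) * r ^ k
        + (r - 1/2) * (1-r)^(a+1) * (K * r^(k-1)) with hE
  have hkr : K * r^(k-1) * r = K * r^k := by
    rcases k with _ | j
    · simp [hK]
    · rw [hK]; push_cast; ring
  set P := ((1-r) - (A+1)*(r-1/2))*r + K*(r-1/2)*(1-r) with hP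
  have key : E * r = (1-r)^a * r^k * P := by
    rw [hE, hP]
    have : E * r = (((1:ℝ))*(1-r)^(a+1) + (r - 1/2)*((A+1) * (1-r)^a * (-1))) * r ^ k * r
        + (r - 1/2) * (1-r)^(a+1) * (K * r^(k-1) * r) := by rw [hE]; ring
    rw [hE] at this
    rw [this, hkr]
    ring
  have hpow1 : (0:ℝ) < (1-r)^a := pow_pos h1r a
  have hpow2 : (0:ℝ) < r^k := pow_pos hr0 k
  have hEP : E = 0 ↔ P = 0 := by
    constructor
    · intro h
      have h0 : (1-r)^a * r^k * P = 0 := by rw [← key, h, zero_mul]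
      rcases mul_eq_zero.mp h0 with h' | h'
      · exact absurd h' (by positivity)
      · exact h'
    · intro h
      have h0 : E * r = 0 := by rw [key, h, mul_zero]
      rcases mul_eq_zero.mp h0 with h' | h'
      · exact h'
      · linarith
  rw [hEP]
  -- quadratic factorization
  set N := A + 1 + K with hNdef
  set rmin := (3*N - 2*(A+1) + 2 - s)/(4*(N+1)) with hrmin
  set rmax := (3*N - 2*(A+1) + 2 + s)/(4*(N+1)) with hrmax
  have hfac : P = -(N+1) * (r - rmin) * (r - rmax) := by
    rw [hP, hrmin, hrmax, hNdef]
    field_simp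
    linear_combination (-2) * hs2
  have hrmin_le : rmin ≤ 1/2 := by
    rw [hrmin, div_le_iff₀ (by linarith : (0:ℝ) < 4*(N+1))]
    have h1 : N - 2*(A+1) ≤ 0 := by
      rw [hNdef, hA, hK]
      have : (k:ℝ) ≤ (a:ℝ) + 1 := by exact_mod_cast (by omega : k ≤ a + 1)
      linarith
    nlinarith [hs0]
  have hdiff : 0 < r - rmin := by linarith
  rw [hfac]
  constructor
  · intro h
    have h3 : r - rmax = 0 := by
      rcases mul_eq_zero.mp h with h' | h'
      · rcases mul_eq_zero.mp h' with h'' | h''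
        · exfalso; rw [neg_eq_zero] at h''; linarith
        · exfalso; linarith
      · exact h'
    exact sub_eq_zero.mp h3
  · intro h
    rw [← h] at *
    simp
end

section
/- Let n, m be natural numbers with 1 ≤ m ≤ n and 2m ≥ n. Then r_max = (3n − 2m + 2 + √((2m − n)² + 4(n + 1))) / (4(n + 1)) satisfies r_max ≤ 1/2 + 1/(2√(n+1)); in particular r_max < 1. -/
/-- For naturals `n`, `m` with `1 ≤ m ≤ n` and `2m ≥ n`,
`r_max = (3n − 2m + 2 + √((2m − n)² + 4(n + 1))) / (4(n + 1))` satisfies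
`r_max ≤ 1/2 + 1/(2√(n+1))`; in particular `r_max < 1`. -/
theorem stmt_3 (n m : ℕ) (hm : 1 ≤ m) (hmn : m ≤ n) (h2m : n ≤ 2 * m) :
    (3 * (n : ℝ) - 2 * (m : ℝ) + 2 +
        Real.sqrt ((2 * (m : ℝ) - (n : ℝ)) ^ 2 + 4 * ((n : ℝ) + 1))) /
      (4 * ((n : ℝ) + 1)) ≤ 1/2 + 1 / (2 * Real.sqrt ((n : ℝ) + 1)) ∧
    (3 * (n : ℝ) - 2 * (m : ℝ) + 2 +
        Real.sqrt ((2 * (m : ℝ) - (n : ℝ)) ^ 2 + 4 * ((n : ℝ) + 1))) /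
      (4 * ((n : ℝ) + 1)) < 1 := by
  have hn1 : (1 : ℝ) ≤ (n : ℝ) := by exact_mod_cast hm.trans hmn
  set a : ℝ := 2 * (m : ℝ) - (n : ℝ) with ha
  have ha0 : 0 ≤ a := by
    have : (n : ℝ) ≤ 2 * (m : ℝ) := by exact_mod_cast h2m
    linarith
  set s : ℝ := Real.sqrt ((n : ℝ) + 1) with hs
  have hs2 : s ^ 2 = (n : ℝ) + 1 := Real.sq_sqrt (by linarith)
  have hs1 : 1 < s := by
    have : (1 : ℝ) = Real.sqrt 1 := (Real.sqrt_one).symm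
    rw [hs]
    nlinarith [Real.sqrt_nonneg ((n:ℝ)+1), Real.sq_sqrt (show (0:ℝ) ≤ (n:ℝ)+1 by linarith)]
  have hsq : Real.sqrt (a ^ 2 + 4 * ((n : ℝ) + 1)) ≤ a + 2 * s := by
    rw [show a ^ 2 + 4 * ((n : ℝ) + 1) = a ^ 2 + 4 * s ^ 2 by rw [hs2]]
    have h1 : a ^ 2 + 4 * s ^ 2 ≤ (a + 2 * s) ^ 2 := by nlinarith
    calc Real.sqrt (a ^ 2 + 4 * s ^ 2) ≤ Real.sqrt ((a + 2 * s) ^ 2) :=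
          Real.sqrt_le_sqrt h1
      _ = a + 2 * s := Real.sqrt_sq (by nlinarith)
  have hma : (3 : ℝ) * n - 2 * m + 2 = 2 * ((n : ℝ) + 1) - a := by ring
  have hle : (3 * (n : ℝ) - 2 * (m : ℝ) + 2 +
        Real.sqrt (a ^ 2 + 4 * ((n : ℝ) + 1))) / (4 * ((n : ℝ) + 1))
      ≤ 1/2 + 1 / (2 * s) := by
    have hd : (0 : ℝ) < 4 * ((n : ℝ) + 1) := by linarith
    have hnum : 3 * (n : ℝ) - 2 * (m : ℝ) + 2 + Real.sqrt (a ^ 2 + 4 * ((n : ℝ) + 1))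
        ≤ 2 * s ^ 2 + 2 * s := by rw [hma, hs2]; linarith
    have heq : (2 * s ^ 2 + 2 * s) / (4 * ((n : ℝ) + 1)) = 1/2 + 1 / (2 * s) := by
      rw [← hs2]; field_simp; ring
    calc _ ≤ (2 * s ^ 2 + 2 * s) / (4 * ((n : ℝ) + 1)) :=
          div_le_div_of_nonneg_right hnum hd.le
      _ = _ := heq
  refine ⟨hle, lt_of_le_of_lt hle ?_⟩
  have : 1 / (2 * s) < 1 / 2 := by
    apply div_lt_div_of_pos_left <;> nlinarith
  linarith
end

section
/- Let n, m be natural numbers with 1 ≤ m ≤ n and 2m ≥ n, and let h_{n,m}(r) = (r − 1/2)(1 − r)^m r^{n−m}. Then for every r in the closed interval [1/2, 1], h_{n,m}(r) ≤ h_{n,m}(r_max), where r_max = (3n − 2m + 2 + √((2m − n)² + 4(n + 1))) / (4(n + 1)); that is, the maximum of h_{n,m} over [1/2, 1] is attained at r_max. -/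
/-- For naturals `n`, `m` with `1 ≤ m ≤ n` and `2m ≥ n`, and
`h r = (r − 1/2)(1 − r)^m r^(n−m)`, for every `r ∈ [1/2, 1]` we have
`h r ≤ h r_max`, where
`r_max = (3n − 2m + 2 + √((2m − n)² + 4(n + 1))) / (4(n + 1))`. -/
theorem stmt_4 (n m : ℕ) (hm : 1 ≤ m) (hmn : m ≤ n) (h2m : n ≤ 2 * m)
    (r : ℝ) (hr : r ∈ Set.Icc (1/2 : ℝ) 1) :
    (r - 1/2) * (1 - r) ^ m * r ^ (n - m) ≤
      (fun r : ℝ => (r - 1/2) * (1 - r) ^ m * r ^ (n - m))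
        ((3 * (n : ℝ) - 2 * (m : ℝ) + 2 +
            Real.sqrt ((2 * (m : ℝ) - (n : ℝ)) ^ 2 + 4 * ((n : ℝ) + 1))) /
          (4 * ((n : ℝ) + 1))) := by
  obtain ⟨k, rfl⟩ : ∃ k, n = m + k := ⟨n - m, by omega⟩
  simp only [Nat.add_sub_cancel_left]
  set N : ℝ := ((m + k : ℕ) : ℝ) with hN
  set M : ℝ := (m : ℝ) with hM
  set K : ℝ := (k : ℝ) with hK
  have hNMK : N = M + K := by push_cast [hN]; ring
  have hM1 : (1:ℝ) ≤ M := by rw [hM]; exact_mod_cast hm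
  have hK0 : (0:ℝ) ≤ K := Nat.cast_nonneg k
  have hKM : K ≤ M := by rw [hM, hK]; exact_mod_cast (by omega : k ≤ m)
  have hD : (0:ℝ) ≤ (2*M - N)^2 + 4*(N+1) := by positivity
  set s : ℝ := Real.sqrt ((2*M - N)^2 + 4*(N+1)) with hsdef
  have hs2 : s^2 = (2*M - N)^2 + 4*(N+1) := Real.sq_sqrt hD
  have hs0 : (0:ℝ) ≤ s := Real.sqrt_nonneg _
  have hN1 : (0:ℝ) < N + 1 := by nlinarith
  set a : ℝ := (3*N - 2*M + 2 + s)/(4*(N+1)) with hadef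
  set b : ℝ := (3*N - 2*M + 2 - s)/(4*(N+1)) with hbdef
  have hb : b < 1/2 := by
    rw [hbdef, div_lt_iff₀ (by linarith)]
    nlinarith
  have ha1 : 1/2 < a := by
    rw [hadef, lt_div_iff₀ (by linarith)]
    nlinarith
  have ha2 : a < 1 := by
    rw [hadef, div_lt_iff₀ (by linarith)]
    nlinarith
  -- derivative
  have hderiv : ∀ x : ℝ, HasDerivAt (fun y : ℝ => (y - 1/2) * (1 - y) ^ m * y ^ k)
      ((1 * (1-x)^m + (x - 1/2) * (↑m * (1-x)^(m-1) * (-1))) * x^k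
        + ((x - 1/2) * (1-x)^m) * (↑k * x^(k-1))) x := by
    intro x
    exact (((hasDerivAt_id x).sub_const (1/2)).mul
      (((hasDerivAt_id x).const_sub 1).pow m)).mul (hasDerivAt_pow k x)
  -- key factorization of x(1-x) * derivative
  have key : ∀ x : ℝ,
      x * (1-x) * ((1 * (1-x)^m + (x - 1/2) * (↑m * (1-x)^(m-1) * (-1))) * x^k
        + ((x - 1/2) * (1-x)^m) * (↑k * x^(k-1)))
      = (1-x)^m * x^k * ((N+1) * (a-x) * (x-b)) := by
    intro x
    have e1 : (K) * x^(k-1) * x = K * x^k := by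
      rcases k with _ | j
      · simp [hK]
      · rw [Nat.add_sub_cancel, pow_succ]; ring
    have e2 : (1-x)^(m-1) * (1-x) = (1-x)^m := by
      rw [← pow_succ, Nat.sub_add_cancel hm]
    have e3 : (N+1) * (a-x) * (x-b) = -(N+1)*x^2 + (1 + K + N/2)*x - K/2 := by
      rw [hNMK] at hs2
      rw [hadef, hbdef, hNMK]
      field_simp
      linear_combination 2 * hs2
    rw [e3, hNMK]
    have hMcast : (↑m : ℝ) = M := rfl
    have hKcast : (↑k : ℝ) = K := rfl
    rw [hMcast, hKcast]
    linear_combination ((1-x) * (x - 1/2) * (1-x)^m) * e1 - (M * x * (x - 1/2) * x^k) * e2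
  set h : ℝ → ℝ := fun y => (y - 1/2) * (1 - y) ^ m * y ^ k with hh
  have hcont : Continuous h := by rw [hh]; fun_prop
  have mono : StrictMonoOn h (Set.Icc (1/2 : ℝ) a) := by
    apply strictMonoOn_of_deriv_pos (convex_Icc _ _) hcont.continuousOn
    intro x hx
    rw [interior_Icc] at hx
    rw [(hderiv x).deriv]
    have hx1 : 1/2 < x := hx.1
    have hx2 : x < a := hx.2
    have hx3 : x < 1 := lt_trans hx2 ha2
    have hq : 0 < (N+1) * (a-x) * (x-b) :=
      mul_pos (mul_pos hN1 (by linarith)) (by linarith)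
    have h1 : (0:ℝ) < (1-x)^m := pow_pos (by linarith) m
    have h2 : (0:ℝ) < x^k := pow_pos (by linarith) k
    have hP : 0 < (1-x)^m * x^k * ((N+1) * (a-x) * (x-b)) :=
      mul_pos (mul_pos h1 h2) hq
    have hxx : (0:ℝ) < x * (1-x) :=
      mul_pos (by linarith) (by linarith)
    have hid := key x
    exact (mul_pos_iff_of_pos_left hxx).mp (by rw [hid]; exact hP)
  have anti : StrictAntiOn h (Set.Icc a 1) := by
    apply strictAntiOn_of_deriv_neg (convex_Icc _ _) hcont.continuousOn
    intro x hx
    rw [interior_Icc] at hx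
    rw [(hderiv x).deriv]
    have hx1 : a < x := hx.1
    have hx3 : x < 1 := hx.2
    have hx0 : 1/2 < x := lt_trans ha1 hx1
    have hq : (N+1) * (a-x) * (x-b) < 0 := by
      have h1 : (N+1) * (a-x) < 0 := mul_neg_of_pos_of_neg hN1 (by linarith)
      exact mul_neg_of_neg_of_pos h1 (by linarith)
    have h1 : (0:ℝ) < (1-x)^m := pow_pos (by linarith) m
    have h2 : (0:ℝ) < x^k := pow_pos (by linarith) k
    have hP : (1-x)^m * x^k * ((N+1) * (a-x) * (x-b)) < 0 :=
      mul_neg_of_pos_of_neg (mul_pos h1 h2) hq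
    have hxx : (0:ℝ) < x * (1-x) :=
      mul_pos (by linarith) (by linarith)
    have hid := key x
    exact neg_of_mul_neg_right (by rw [hid]; exact hP) hxx.le
  show h r ≤ h a
  rcases le_total r a with hra | har
  · exact mono.monotoneOn ⟨hr.1, hra⟩ ⟨ha1.le, le_refl a⟩ hra
  · exact anti.antitoneOn ⟨le_refl a, ha2.le⟩ ⟨har, hr.2⟩ har
end

section
/- Fix a natural number d. Define, for n > 2d, C(n, n − d) = (2(n+1)(n+2)/(n − 2d)) · (n choose n−d) · sup_{r ∈ [1/2, 1]} (r − 1/2)(1 − r)^{n−d} r^{d}. Then C(n, n − d) tends to 0 as n → ∞. -/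
open Filter

lemma aux_tendsto (k : ℕ) :
    Tendsto (fun n : ℕ => ((n : ℝ) + 1) ^ k * (1/2 : ℝ) ^ n) atTop (nhds 0) := by
  have h := tendsto_pow_const_mul_const_pow_of_lt_one k (r := (1/2 : ℝ)) (by norm_num) (by norm_num)
  have h2 := (h.comp (tendsto_add_atTop_nat 1)).const_mul (2 : ℝ)
  simp only [mul_zero] at h2
  refine h2.congr fun n => ?_
  simp only [Function.comp]
  push_cast
  rw [pow_succ]
  ring

/-- Fix a natural `d`. Then
`C(n, n − d) = (2(n+1)(n+2)/(n − 2d)) · (n choose n−d) · sup_{r ∈ [1/2,1]} (r − 1/2)(1 − r)^(n−d) r^d`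
tends to `0` as `n → ∞`. -/
theorem stmt_6 (d : ℕ) :
    Filter.Tendsto
      (fun n : ℕ =>
        2 * ((n : ℝ) + 1) * ((n : ℝ) + 2) / ((n : ℝ) - 2 * (d : ℝ)) *
          (n.choose (n - d) : ℝ) *
          sSup ((fun r : ℝ => (r - 1/2) * (1 - r) ^ (n - d) * r ^ d) ''
            Set.Icc (1/2 : ℝ) 1))
      Filter.atTop (nhds 0) := by
  have hg : Tendsto (fun n : ℕ => (4 * 2 ^ d : ℝ) * (((n : ℝ) + 1) ^ (d + 2) * (1/2 : ℝ) ^ n))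
      atTop (nhds 0) := by
    simpa using (aux_tendsto (d + 2)).const_mul (4 * 2 ^ d : ℝ)
  apply tendsto_of_tendsto_of_tendsto_of_le_of_le' tendsto_const_nhds hg
  · -- eventually 0 ≤ term
    filter_upwards [eventually_ge_atTop (2 * d + 1)] with n hn
    have hdn : d ≤ n := le_trans (by omega) hn
    have hAcast : (1 : ℝ) ≤ (n : ℝ) - 2 * d := by
      have : (2 * d + 1 : ℕ) ≤ n := hn
      have h2 : ((2 * d + 1 : ℕ) : ℝ) ≤ (n : ℝ) := Nat.cast_le.mpr this
      push_cast at h2; linarith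
    have hA : (0 : ℝ) ≤ 2 * ((n : ℝ) + 1) * ((n : ℝ) + 2) / ((n : ℝ) - 2 * (d : ℝ)) := by
      apply div_nonneg <;> positivity
    have hS : (0 : ℝ) ≤ sSup ((fun r : ℝ => (r - 1/2) * (1 - r) ^ (n - d) * r ^ d) ''
        Set.Icc (1/2 : ℝ) 1) := by
      have hmem : (0 : ℝ) ∈ (fun r : ℝ => (r - 1/2) * (1 - r) ^ (n - d) * r ^ d) ''
          Set.Icc (1/2 : ℝ) 1 := ⟨1/2, by norm_num⟩
      have hbdd : BddAbove ((fun r : ℝ => (r - 1/2) * (1 - r) ^ (n - d) * r ^ d) ''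
          Set.Icc (1/2 : ℝ) 1) := by
        refine ⟨1, ?_⟩
        rintro x ⟨r, ⟨hr1, hr2⟩, rfl⟩
        have h1 : r - 1/2 ≤ 1 := by linarith
        have h2 : (1 - r) ^ (n - d) ≤ 1 := pow_le_one₀ (by linarith) (by linarith)
        have h3 : r ^ d ≤ 1 := pow_le_one₀ (by linarith) hr2
        calc (r - 1/2) * (1 - r) ^ (n - d) * r ^ d ≤ 1 * 1 * 1 := by
              apply mul_le_mul (mul_le_mul h1 h2 (pow_nonneg (by linarith) _) (by norm_num)) h3
                (pow_nonneg (by linarith) _) (by norm_num)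
          _ = 1 := by norm_num
      exact le_csSup hbdd hmem
    positivity
  · -- eventually term ≤ g
    filter_upwards [eventually_ge_atTop (2 * d + 1)] with n hn
    have hdn : d ≤ n := le_trans (by omega) hn
    have hAcast : (1 : ℝ) ≤ (n : ℝ) - 2 * d := by
      have : (2 * d + 1 : ℕ) ≤ n := hn
      have h2 : ((2 * d + 1 : ℕ) : ℝ) ≤ (n : ℝ) := Nat.cast_le.mpr this
      push_cast at h2; linarith
    -- sup bound
    have hS : sSup ((fun r : ℝ => (r - 1/2) * (1 - r) ^ (n - d) * r ^ d) ''
        Set.Icc (1/2 : ℝ) 1) ≤ (1/2 : ℝ) ^ (n - d) := by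
      apply Real.sSup_le
      · rintro x ⟨r, ⟨hr1, hr2⟩, rfl⟩
        have h1 : r - 1/2 ≤ 1 := by linarith
        have h2 : (1 - r) ^ (n - d) ≤ (1/2 : ℝ) ^ (n - d) :=
          pow_le_pow_left₀ (by linarith) (by linarith) _
        have h3 : r ^ d ≤ 1 := pow_le_one₀ (by linarith) hr2
        calc (r - 1/2) * (1 - r) ^ (n - d) * r ^ d
            ≤ 1 * (1/2 : ℝ) ^ (n - d) * 1 := by
              apply mul_le_mul (mul_le_mul h1 h2 (pow_nonneg (by linarith) _) (by norm_num)) h3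
                (pow_nonneg (by linarith) _) (by positivity)
          _ = (1/2 : ℝ) ^ (n - d) := by ring
      · positivity
    have hSnn : (0 : ℝ) ≤ sSup ((fun r : ℝ => (r - 1/2) * (1 - r) ^ (n - d) * r ^ d) ''
        Set.Icc (1/2 : ℝ) 1) := by
      have hmem : (0 : ℝ) ∈ (fun r : ℝ => (r - 1/2) * (1 - r) ^ (n - d) * r ^ d) ''
          Set.Icc (1/2 : ℝ) 1 := ⟨1/2, by norm_num⟩
      have hbdd : BddAbove ((fun r : ℝ => (r - 1/2) * (1 - r) ^ (n - d) * r ^ d) ''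
          Set.Icc (1/2 : ℝ) 1) := by
        refine ⟨(1/2 : ℝ) ^ (n - d), ?_⟩
        rintro x ⟨r, ⟨hr1, hr2⟩, rfl⟩
        have h1 : r - 1/2 ≤ 1 := by linarith
        have h2 : (1 - r) ^ (n - d) ≤ (1/2 : ℝ) ^ (n - d) :=
          pow_le_pow_left₀ (by linarith) (by linarith) _
        have h3 : r ^ d ≤ 1 := pow_le_one₀ (by linarith) hr2
        calc (r - 1/2) * (1 - r) ^ (n - d) * r ^ d
            ≤ 1 * (1/2 : ℝ) ^ (n - d) * 1 := by
              apply mul_le_mul (mul_le_mul h1 h2 (pow_nonneg (by linarith) _) (by norm_num)) h3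
                (pow_nonneg (by linarith) _) (by positivity)
          _ = (1/2 : ℝ) ^ (n - d) := by ring
      exact le_csSup hbdd hmem
    -- A bound
    have hA : 2 * ((n : ℝ) + 1) * ((n : ℝ) + 2) / ((n : ℝ) - 2 * (d : ℝ))
        ≤ 2 * ((n : ℝ) + 1) * ((n : ℝ) + 2) := by
      apply div_le_self (by positivity) hAcast
    have hAnn : (0 : ℝ) ≤ 2 * ((n : ℝ) + 1) * ((n : ℝ) + 2) / ((n : ℝ) - 2 * (d : ℝ)) := by
      apply div_nonneg <;> positivity
    -- choose bound
    have hB : (n.choose (n - d) : ℝ) ≤ ((n : ℝ) + 1) ^ d := by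
      rw [Nat.choose_symm hdn]
      calc (n.choose d : ℝ) ≤ ((n : ℝ)) ^ d := by
            exact_mod_cast Nat.choose_le_pow n d
        _ ≤ ((n : ℝ) + 1) ^ d := pow_le_pow_left₀ (by positivity) (by linarith) _
    -- pow rewrite
    have hpow : (1/2 : ℝ) ^ (n - d) = 2 ^ d * (1/2 : ℝ) ^ n := by
      have h : n = (n - d) + d := (Nat.sub_add_cancel hdn).symm
      rw [h, pow_add]
      have : (2 : ℝ) ^ d * (1/2 : ℝ) ^ d = 1 := by
        rw [← mul_pow]; norm_num
      rw [Nat.add_sub_cancel]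
      linear_combination (-(1/2 : ℝ) ^ (n - d)) * this
    calc 2 * ((n : ℝ) + 1) * ((n : ℝ) + 2) / ((n : ℝ) - 2 * (d : ℝ)) *
          (n.choose (n - d) : ℝ) *
          sSup ((fun r : ℝ => (r - 1/2) * (1 - r) ^ (n - d) * r ^ d) ''
            Set.Icc (1/2 : ℝ) 1)
        ≤ (2 * ((n : ℝ) + 1) * ((n : ℝ) + 2)) * (((n : ℝ) + 1) ^ d) * ((1/2 : ℝ) ^ (n - d)) := by
          apply mul_le_mul (mul_le_mul hA hB (by positivity) (by positivity)) hS hSnn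
            (by positivity)
      _ ≤ (4 * 2 ^ d : ℝ) * (((n : ℝ) + 1) ^ (d + 2) * (1/2 : ℝ) ^ n) := by
          rw [hpow, pow_add]
          have hn2 : (n : ℝ) + 2 ≤ 2 * ((n : ℝ) + 1) := by
            have : (0 : ℝ) ≤ (n : ℝ) := Nat.cast_nonneg n
            linarith
          have key : 2 * ((n : ℝ) + 1) * ((n : ℝ) + 2) ≤ 4 * ((n : ℝ) + 1) ^ 2 := by nlinarith
          calc 2 * ((n : ℝ) + 1) * ((n : ℝ) + 2) * ((n : ℝ) + 1) ^ d * (2 ^ d * (1/2 : ℝ) ^ n)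
              ≤ 4 * ((n : ℝ) + 1) ^ 2 * ((n : ℝ) + 1) ^ d * (2 ^ d * (1/2 : ℝ) ^ n) := by
                apply mul_le_mul_of_nonneg_right (mul_le_mul_of_nonneg_right key (by positivity))
                  (by positivity)
            _ = (4 * 2 ^ d : ℝ) * (((n : ℝ) + 1) ^ d * ((n : ℝ) + 1) ^ 2 * (1/2 : ℝ) ^ n) := by
                ring
end

section
/- Fix a real number q with 1/2 < q < 1. For natural n, let m(n) = ⌈q·n⌉. Then C(n, m(n)) = (2(n+1)(n+2)/(2m(n) − n)) · (n choose m(n)) · sup_{r ∈ [1/2, 1]} (r − 1/2)(1 − r)^{m(n)} r^{n−m(n)} tends to 0 as n → ∞ (the expression being defined for all n large enough that 2m(n) > n and m(n) ≤ n). -/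
open Filter Real

lemma aux_log_lb {x : ℝ} (hx : 0 < x) (hx1 : x ≠ 1) : 1 - 1/x < Real.log x := by
  have h := Real.log_lt_sub_one_of_pos (x := 1/x) (by positivity)
    (by simp [div_eq_one_iff_eq hx.ne', eq_comm, hx1])
  rw [one_div, Real.log_inv] at h
  rw [one_div]
  linarith

lemma aux_c_pos (q : ℝ) (hq1 : 1/2 < q) (hq2 : q < 1) :
    0 < q * Real.log (2*q) + (1-q) * Real.log (2*(1-q)) := by
  have hq0 : 0 < q := by linarith
  have h1q : 0 < 1 - q := by linarith
  have hA : 1 - 1/(2*q) < Real.log (2*q) :=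
    aux_log_lb (by linarith) (by intro h; linarith)
  have hB : 1 - 1/(2*(1-q)) < Real.log (2*(1-q)) :=
    aux_log_lb (by linarith) (by intro h; linarith)
  have hA' : q - 1/2 < q * Real.log (2*q) := by
    have := mul_lt_mul_of_pos_left hA hq0
    have hid : q * (1 - 1/(2*q)) = q - 1/2 := by field_simp
    linarith [hid ▸ this]
  have hB' : (1-q) - 1/2 < (1-q) * Real.log (2*(1-q)) := by
    have := mul_lt_mul_of_pos_left hB h1q
    have hid : (1-q) * (1 - 1/(2*(1-q))) = (1-q) - 1/2 := by field_simp
    linarith [hid ▸ this]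
  linarith

/-- Fix a real `q` with `1/2 < q < 1`. For natural `n`, let
`m(n) = ⌈q·n⌉`. Then
`C(n, m(n)) = (2(n+1)(n+2)/(2m(n) − n)) · (n choose m(n)) · sup_{r ∈ [1/2,1]} (r − 1/2)(1 − r)^(m(n)) r^(n−m(n))`
tends to `0` as `n → ∞`. -/
theorem stmt_7 (q : ℝ) (hq1 : 1/2 < q) (hq2 : q < 1) :
    Filter.Tendsto
      (fun n : ℕ =>
        2 * ((n : ℝ) + 1) * ((n : ℝ) + 2) /
            (2 * ((⌈q * (n : ℝ)⌉₊ : ℝ)) - (n : ℝ)) *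
          (n.choose ⌈q * (n : ℝ)⌉₊ : ℝ) *
          sSup ((fun r : ℝ =>
              (r - 1/2) * (1 - r) ^ ⌈q * (n : ℝ)⌉₊ * r ^ (n - ⌈q * (n : ℝ)⌉₊)) ''
            Set.Icc (1/2 : ℝ) 1))
      Filter.atTop (nhds 0) := by
  have hq0 : 0 < q := by linarith
  have h1q : 0 < 1 - q := by linarith
  set c : ℝ := q * Real.log (2*q) + (1-q) * Real.log (2*(1-q)) with hc
  have hcpos : 0 < c := aux_c_pos q hq1 hq2
  -- the dominating sequence
  set g : ℕ → ℝ := fun n => ((n:ℝ)+1) * ((n:ℝ)+2) * Real.exp (-(c * n)) with hg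
  have main : ∀ᶠ n : ℕ in atTop,
      0 ≤ (2 * ((n : ℝ) + 1) * ((n : ℝ) + 2) /
            (2 * ((⌈q * (n : ℝ)⌉₊ : ℝ)) - (n : ℝ)) *
          (n.choose ⌈q * (n : ℝ)⌉₊ : ℝ) *
          sSup ((fun r : ℝ =>
              (r - 1/2) * (1 - r) ^ ⌈q * (n : ℝ)⌉₊ * r ^ (n - ⌈q * (n : ℝ)⌉₊)) ''
            Set.Icc (1/2 : ℝ) 1)) ∧
      (2 * ((n : ℝ) + 1) * ((n : ℝ) + 2) /
            (2 * ((⌈q * (n : ℝ)⌉₊ : ℝ)) - (n : ℝ)) *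
          (n.choose ⌈q * (n : ℝ)⌉₊ : ℝ) *
          sSup ((fun r : ℝ =>
              (r - 1/2) * (1 - r) ^ ⌈q * (n : ℝ)⌉₊ * r ^ (n - ⌈q * (n : ℝ)⌉₊)) ''
            Set.Icc (1/2 : ℝ) 1)) ≤ g n := by
    filter_upwards [Filter.eventually_ge_atTop 1] with n hn
    set m : ℕ := ⌈q * (n : ℝ)⌉₊ with hm
    have hqn : q * n ≤ (m : ℝ) := Nat.le_ceil _
    have hmn : m ≤ n := Nat.ceil_le.2 (by nlinarith [Nat.cast_nonneg (α := ℝ) n])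
    have hn1 : (1:ℝ) ≤ n := by exact_mod_cast hn
    have h2m : n < 2 * m := by
      have : (n:ℝ) < 2 * m := by nlinarith
      exact_mod_cast this
    have hd1 : (1:ℝ) ≤ 2 * (m:ℝ) - n := by
      have : (n:ℝ) + 1 ≤ 2 * m := by exact_mod_cast h2m
      linarith
    -- pointwise bound on the function inside the sSup
    have hpt : ∀ r ∈ Set.Icc (1/2 : ℝ) 1,
        (r - 1/2) * (1 - r) ^ m * r ^ (n - m) ≤ (1/2:ℝ)^(n+1) := by
      rintro r ⟨hr1, hr2⟩
      have h1 : (0:ℝ) ≤ r - 1/2 := by linarith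
      have h2 : r - 1/2 ≤ 1/2 := by linarith
      have h3 : (0:ℝ) ≤ 1 - r := by linarith
      have h4 : 1 - r ≤ 1/2 := by linarith
      have h5 : (0:ℝ) ≤ r := by linarith
      have hexp : (n - m) + (2*m - n) = m := by omega
      have hid : (1 - r) ^ m * r ^ (n - m)
          = ((1 - r) * r) ^ (n - m) * (1 - r) ^ (2*m - n) := by
        rw [mul_pow, mul_right_comm, ← pow_add, hexp]
      have hb1 : ((1 - r) * r) ^ (n - m) ≤ ((1/4:ℝ)) ^ (n - m) :=
        pow_le_pow_left₀ (mul_nonneg h3 h5) (by nlinarith [sq_nonneg (r - 1/2)]) _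
      have hb2 : (1 - r) ^ (2*m - n) ≤ ((1/2:ℝ)) ^ (2*m - n) :=
        pow_le_pow_left₀ h3 h4 _
      have hchain : (r - 1/2) * (1 - r) ^ m * r ^ (n - m)
          ≤ (1/2) * ((1/4:ℝ)) ^ (n - m) * ((1/2:ℝ)) ^ (2*m - n) := by
        rw [mul_assoc, hid, ← mul_assoc]
        have hnn1 : (0:ℝ) ≤ ((1 - r) * r) ^ (n - m) := pow_nonneg (mul_nonneg h3 h5) _
        have hnn2 : (0:ℝ) ≤ (1 - r) ^ (2*m - n) := pow_nonneg h3 _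
        apply mul_le_mul _ hb2 hnn2 (by positivity)
        exact mul_le_mul h2 hb1 hnn1 (by norm_num)
      have heq : (1/2:ℝ) * ((1/4:ℝ)) ^ (n - m) * ((1/2:ℝ)) ^ (2*m - n)
          = (1/2:ℝ)^(n+1) := by
        have h14 : (1/4:ℝ) = (1/2:ℝ)^2 := by norm_num
        rw [h14, ← pow_mul, mul_assoc, ← pow_add, ← pow_succ']
        congr 1
        omega
      linarith [heq ▸ hchain]
    set S := sSup ((fun r : ℝ =>
        (r - 1/2) * (1 - r) ^ m * r ^ (n - m)) '' Set.Icc (1/2 : ℝ) 1) with hS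
    have hbdd : BddAbove ((fun r : ℝ =>
        (r - 1/2) * (1 - r) ^ m * r ^ (n - m)) '' Set.Icc (1/2 : ℝ) 1) := by
      refine ⟨(1/2:ℝ)^(n+1), ?_⟩
      rintro x ⟨r, hr, rfl⟩
      exact hpt r hr
    have hne : ((fun r : ℝ =>
        (r - 1/2) * (1 - r) ^ m * r ^ (n - m)) '' Set.Icc (1/2 : ℝ) 1).Nonempty :=
      ⟨_, ⟨1/2, by constructor <;> norm_num, rfl⟩⟩
    have hS_ub : S ≤ (1/2:ℝ)^(n+1) := by
      apply csSup_le hne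
      rintro x ⟨r, hr, rfl⟩
      exact hpt r hr
    have hS_lb : 0 ≤ S := by
      have hmem : (0:ℝ) ∈ ((fun r : ℝ =>
          (r - 1/2) * (1 - r) ^ m * r ^ (n - m)) '' Set.Icc (1/2 : ℝ) 1) :=
        ⟨1/2, by constructor <;> norm_num, by norm_num⟩
      exact le_csSup hbdd hmem
    have hdpos : (0:ℝ) < 2 * (m:ℝ) - n := by linarith
    have hPnn : (0:ℝ) ≤ 2 * ((n:ℝ)+1) * ((n:ℝ)+2) / (2 * (m:ℝ) - n) := by positivity
    have hCnn : (0:ℝ) ≤ (n.choose m : ℝ) := Nat.cast_nonneg _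
    constructor
    · exact mul_nonneg (mul_nonneg hPnn hCnn) hS_lb
    -- binomial bound: choose * q^m * (1-q)^(n-m) ≤ 1
    have hC : q^m * (1-q)^(n-m) * (n.choose m : ℝ) ≤ 1 := by
      have hsum := add_pow q (1-q) n
      have hterm : q^m * (1-q)^(n-m) * (n.choose m : ℝ)
          ≤ ∑ k ∈ Finset.range (n+1), q^k * (1-q)^(n-k) * (n.choose k : ℝ) := by
        apply Finset.single_le_sum (f := fun k => q^k * (1-q)^(n-k) * (n.choose k : ℝ))
          (fun i _ => by positivity) (Finset.mem_range.2 (by omega))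
      have : ((q + (1-q)) : ℝ)^n = 1 := by norm_num
      rw [hsum] at this
      linarith
    -- exponential estimates
    have hL : q^m * (1-q)^(n-m)
        = Real.exp ((m:ℝ) * Real.log q + ((n:ℝ) - m) * Real.log (1-q)) := by
      rw [show ((n:ℝ) - m) = ((n - m : ℕ) : ℝ) from (Nat.cast_sub hmn).symm,
        Real.exp_add, Real.exp_nat_mul, Real.exp_nat_mul,
        Real.exp_log hq0, Real.exp_log h1q]
    have hCle : (n.choose m : ℝ)
        ≤ Real.exp (-((m:ℝ) * Real.log q + ((n:ℝ) - m) * Real.log (1-q))) := by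
      have h1' : (n.choose m : ℝ)
          * Real.exp ((m:ℝ) * Real.log q + ((n:ℝ) - m) * Real.log (1-q)) ≤ 1 := by
        rw [← hL, mul_comm]; exact hC
      have h3 := mul_le_mul_of_nonneg_right h1'
        (Real.exp_pos (-((m:ℝ) * Real.log q + ((n:ℝ) - m) * Real.log (1-q)))).le
      rwa [mul_assoc, ← Real.exp_add, add_neg_cancel, Real.exp_zero, mul_one, one_mul] at h3
    have h2n : ((1:ℝ)/2)^n = Real.exp ((n:ℝ) * (-Real.log 2)) := by
      rw [Real.exp_nat_mul, Real.exp_neg, Real.exp_log (by norm_num : (0:ℝ) < 2)]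
      norm_num
    have hlogq : Real.log (1-q) ≤ Real.log q :=
      Real.log_le_log h1q (by linarith)
    have hexpineq : -((m:ℝ) * Real.log q + ((n:ℝ) - m) * Real.log (1-q)) + (n:ℝ) * (-Real.log 2)
        ≤ -(c * n) := by
      have hlog2q : Real.log (2*q) = Real.log 2 + Real.log q :=
        Real.log_mul two_ne_zero hq0.ne'
      have hlog2q' : Real.log (2*(1-q)) = Real.log 2 + Real.log (1-q) :=
        Real.log_mul two_ne_zero h1q.ne'
      rw [hc, hlog2q, hlog2q']
      nlinarith [mul_nonneg (sub_nonneg.2 hqn) (sub_nonneg.2 hlogq)]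
    have hstep3 : (n.choose m : ℝ) * ((1:ℝ)/2)^n ≤ Real.exp (-(c * n)) := by
      rw [h2n]
      calc (n.choose m : ℝ) * Real.exp ((n:ℝ) * (-Real.log 2))
          ≤ Real.exp (-((m:ℝ) * Real.log q + ((n:ℝ) - m) * Real.log (1-q)))
            * Real.exp ((n:ℝ) * (-Real.log 2)) :=
            mul_le_mul_of_nonneg_right hCle (Real.exp_pos _).le
        _ = Real.exp (-((m:ℝ) * Real.log q + ((n:ℝ) - m) * Real.log (1-q))
              + (n:ℝ) * (-Real.log 2)) := (Real.exp_add _ _).symm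
        _ ≤ Real.exp (-(c * n)) := Real.exp_le_exp.2 hexpineq
    -- assemble
    have step1 : 2 * ((n:ℝ)+1) * ((n:ℝ)+2) / (2 * (m:ℝ) - n) * (n.choose m : ℝ) * S
        ≤ 2 * ((n:ℝ)+1) * ((n:ℝ)+2) / (2 * (m:ℝ) - n) * (n.choose m : ℝ) * (1/2:ℝ)^(n+1) :=
      mul_le_mul_of_nonneg_left hS_ub (mul_nonneg hPnn hCnn)
    have step2 : 2 * ((n:ℝ)+1) * ((n:ℝ)+2) / (2 * (m:ℝ) - n) * (n.choose m : ℝ) * (1/2:ℝ)^(n+1)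
        ≤ 2 * ((n:ℝ)+1) * ((n:ℝ)+2) * (n.choose m : ℝ) * (1/2:ℝ)^(n+1) := by
      have := div_le_self (by positivity : (0:ℝ) ≤ 2 * ((n:ℝ)+1) * ((n:ℝ)+2)) hd1
      exact mul_le_mul_of_nonneg_right (mul_le_mul_of_nonneg_right this hCnn) (by positivity)
    have step4 : 2 * ((n:ℝ)+1) * ((n:ℝ)+2) * (n.choose m : ℝ) * (1/2:ℝ)^(n+1)
        = ((n:ℝ)+1) * ((n:ℝ)+2) * ((n.choose m : ℝ) * ((1:ℝ)/2)^n) := by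
      rw [pow_succ]
      ring
    have step5 : ((n:ℝ)+1) * ((n:ℝ)+2) * ((n.choose m : ℝ) * ((1:ℝ)/2)^n)
        ≤ ((n:ℝ)+1) * ((n:ℝ)+2) * Real.exp (-(c * n)) :=
      mul_le_mul_of_nonneg_left hstep3 (by positivity)
    calc 2 * ((n:ℝ)+1) * ((n:ℝ)+2) / (2 * (m:ℝ) - n) * (n.choose m : ℝ) * S
        ≤ 2 * ((n:ℝ)+1) * ((n:ℝ)+2) / (2 * (m:ℝ) - n) * (n.choose m : ℝ) * (1/2:ℝ)^(n+1) := step1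
      _ ≤ 2 * ((n:ℝ)+1) * ((n:ℝ)+2) * (n.choose m : ℝ) * (1/2:ℝ)^(n+1) := step2
      _ = ((n:ℝ)+1) * ((n:ℝ)+2) * ((n.choose m : ℝ) * ((1:ℝ)/2)^n) := step4
      _ ≤ g n := step5
  -- the dominating sequence tends to 0
  have hg0 : Tendsto g atTop (nhds 0) := by
    have hR : |Real.exp (-c)| < 1 := by
      rw [abs_of_pos (Real.exp_pos _)]
      exact Real.exp_lt_one_iff.2 (by linarith)
    have hgeq : g = fun n : ℕ =>
        (n:ℝ)^2 * (Real.exp (-c))^n + 3 * ((n:ℝ)^1 * (Real.exp (-c))^n)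
          + 2 * ((n:ℝ)^0 * (Real.exp (-c))^n) := by
      funext n
      rw [hg]
      simp only
      rw [show -(c * (n:ℝ)) = (n:ℝ) * (-c) by ring, Real.exp_nat_mul]
      ring
    rw [hgeq]
    have h2 := tendsto_pow_const_mul_const_pow_of_abs_lt_one 2 hR
    have h1 := tendsto_pow_const_mul_const_pow_of_abs_lt_one 1 hR
    have h0 := tendsto_pow_const_mul_const_pow_of_abs_lt_one 0 hR
    have := (h2.add ((h1.const_mul 3))).add (h0.const_mul 2)
    simpa using this
  exact tendsto_of_tendsto_of_tendsto_of_le_of_le' tendsto_const_nhds hg0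
    (main.mono fun n h => h.1) (main.mono fun n h => h.2)
end

section
/- Let ε be a real number with 0 ≤ ε < 1 and let m ≥ 1 be a natural number. Then the function r ↦ ((1 − ε)(1 − r) + ε)^m / (1 − r)^{(1−ε)m} is monotone nondecreasing on the interval [0, 1), where (1 − r)^{(1−ε)m} denotes the real power of 1 − r with the real exponent (1 − ε)·m. -/
lemma aux_antitone (ε : ℝ) (hε0 : 0 ≤ ε) (hε1 : ε < 1) :
    AntitoneOn (fun x : ℝ => ((1 - ε) * x + ε) * x ^ (ε - 1)) (Set.Ioc (0 : ℝ) 1) := by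
  have hint : interior (Set.Ioc (0 : ℝ) 1) = Set.Ioo 0 1 := interior_Ioc
  have hderiv : ∀ x ∈ Set.Ioo (0 : ℝ) 1,
      HasDerivAt (fun x : ℝ => ((1 - ε) * x + ε) * x ^ (ε - 1))
        (x ^ (ε - 2) * ((1 - ε) * ε * (x - 1))) x := by
    intro x hx
    have hx0 : (0 : ℝ) < x := hx.1
    have h1 : HasDerivAt (fun x : ℝ => (1 - ε) * x + ε) (1 - ε) x := by
      simpa using ((hasDerivAt_id x).const_mul (1 - ε)).add_const ε
    have h2 : HasDerivAt (fun x : ℝ => x ^ (ε - 1)) ((ε - 1) * x ^ (ε - 1 - 1)) x :=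
      Real.hasDerivAt_rpow_const (Or.inl hx0.ne')
    have h := h1.mul h2
    refine h.congr_deriv ?_
    have he1 : x ^ (ε - 1) = x ^ (ε - 2) * x := by
      rw [← Real.rpow_add_one hx0.ne']; ring_nf
    have he2 : ε - 1 - 1 = ε - 2 := by ring
    rw [he2, he1]
    ring
  apply antitoneOn_of_deriv_nonpos (convex_Ioc 0 1)
  · apply ContinuousOn.mul
    · fun_prop
    · exact ContinuousOn.rpow_const continuousOn_id (fun x hx => Or.inl hx.1.ne')
  · intro x hx
    rw [hint] at hx
    exact ((hderiv x hx).differentiableAt).differentiableWithinAt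
  · intro x hx
    rw [hint] at hx
    rw [(hderiv x hx).deriv]
    have h1 : (0:ℝ) ≤ x ^ (ε - 2) := Real.rpow_nonneg hx.1.le _
    have h2 : (1 - ε) * ε * (x - 1) ≤ 0 := by
      apply mul_nonpos_of_nonneg_of_nonpos
      · exact mul_nonneg (by linarith) hε0
      · linarith [hx.2]
    exact mul_nonpos_of_nonneg_of_nonpos h1 h2

/-- For real `0 ≤ ε < 1` and natural `m ≥ 1`, the function
`r ↦ ((1 − ε)(1 − r) + ε)^m / (1 − r)^((1−ε)m)` is monotone nondecreasing on
`[0, 1)`, where the denominator is a real power. -/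
theorem stmt_8 (ε : ℝ) (hε0 : 0 ≤ ε) (hε1 : ε < 1) (m : ℕ) (hm : 1 ≤ m) :
    MonotoneOn
      (fun r : ℝ => ((1 - ε) * (1 - r) + ε) ^ m / (1 - r) ^ ((1 - ε) * (m : ℝ)))
      (Set.Ico (0 : ℝ) 1) := by
  have key : ∀ r ∈ Set.Ico (0 : ℝ) 1,
      ((1 - ε) * (1 - r) + ε) ^ m / (1 - r) ^ ((1 - ε) * (m : ℝ))
        = (((1 - ε) * (1 - r) + ε) * (1 - r) ^ (ε - 1)) ^ m := by
    intro r hr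
    have hx : (0 : ℝ) < 1 - r := by linarith [hr.2]
    rw [mul_pow, ← Real.rpow_natCast ((1 - r) ^ (ε - 1)) m, ← Real.rpow_mul hx.le]
    rw [div_eq_mul_inv, ← Real.rpow_neg hx.le]
    ring_nf
  intro a ha b hb hab
  simp only
  rw [key a ha, key b hb]
  have hga : (1 : ℝ) - b ∈ Set.Ioc (0 : ℝ) 1 := ⟨by linarith [hb.2], by linarith [hb.1]⟩
  have hgb : (1 : ℝ) - a ∈ Set.Ioc (0 : ℝ) 1 := ⟨by linarith [ha.2], by linarith [ha.1]⟩
  have hle : (1 : ℝ) - b ≤ 1 - a := by linarith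
  have h := aux_antitone ε hε0 hε1 hga hgb hle
  apply pow_le_pow_left₀ _ h
  have : (0:ℝ) ≤ (1 - ε) * (1 - a) + ε := by nlinarith [ha.2]
  exact mul_nonneg this (Real.rpow_nonneg (by linarith [ha.2]) _)
end

section
/- Let ε be a real number with 0 ≤ ε < 1, let n, m be naturals with 1 ≤ m ≤ n, and define f(r) = ((1 − ε)(1 − r) + ε)^m r^{n−m} and g(r) = (1 − r)^{(1−ε)m} r^{n−m} for r ∈ [0, 1], where (1 − r)^{(1−ε)m} is a real power. Then the probability measure on [0,1] with density proportional to f stochastically dominates the one with density proportional to g: for every x ∈ [0, 1], (∫₀ˣ f(r) dr)·(∫₀¹ g(r) dr) ≤ (∫₀ˣ g(r) dr)·(∫₀¹ f(r) dr). -/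
open MeasureTheory

lemma lemA9 (ε t u : ℝ) (hε0 : 0 ≤ ε) (hε1 : ε < 1) (ht0 : 0 < t) (ht1 : t ≤ 1)
    (hu0 : 0 ≤ u) (hu1 : u ≤ 1) :
    ((1 - ε) * u + ε) * t ^ (1 - ε) ≤ (1 - ε) * (u * t) + ε := by
  have h1 : t ≤ t ^ (1 - ε) := by
    calc t = t ^ (1 : ℝ) := (Real.rpow_one t).symm
    _ ≤ t ^ (1 - ε) := Real.rpow_le_rpow_of_exponent_ge ht0 ht1 (by linarith)
  have h2 : t ^ (1 - ε) ≤ (1 - ε) * t + ε := by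
    have := Real.geom_mean_le_arith_mean2_weighted (by linarith : (0:ℝ) ≤ 1 - ε) hε0
      ht0.le zero_le_one (by ring)
    simpa using this
  nlinarith [mul_nonneg (sub_nonneg.2 hu1) (sub_nonneg.2 h1)]

lemma lemB9 (ε : ℝ) (hε0 : 0 ≤ ε) (hε1 : ε < 1) (m : ℕ) (hm : 1 ≤ m)
    (s t : ℝ) (hs : 0 ≤ s) (hst : s ≤ t) (ht : t ≤ 1) :
    ((1 - ε) * (1 - s) + ε) ^ m * (1 - t) ^ ((1 - ε) * (m : ℝ)) ≤
      (1 - s) ^ ((1 - ε) * (m : ℝ)) * ((1 - ε) * (1 - t) + ε) ^ m := by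
  set u : ℝ := 1 - s with hu
  set v : ℝ := 1 - t with hv
  have hv0 : 0 ≤ v := by simp [hv]; linarith
  have hvu : v ≤ u := by simp [hu, hv]; linarith
  have hu1 : u ≤ 1 := by simp [hu]; linarith
  have hexp : 0 < (1 - ε) * (m : ℝ) := by
    have : (1:ℝ) ≤ (m : ℝ) := by exact_mod_cast hm
    nlinarith
  rcases hv0.eq_or_lt with hveq | hvpos
  · rw [← hveq, Real.zero_rpow hexp.ne', mul_zero]
    have h1 : (0:ℝ) ≤ u ^ ((1 - ε) * (m : ℝ)) := Real.rpow_nonneg (by linarith) _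
    have h2 : (0:ℝ) ≤ ((1 - ε) * 0 + ε) ^ m := pow_nonneg (by linarith) m
    exact mul_nonneg h1 h2
  · have hupos : 0 < u := lt_of_lt_of_le hvpos hvu
    have hur : (0:ℝ) < u ^ (1 - ε) := Real.rpow_pos_of_pos hupos _
    -- rewrite the rpows with product exponent
    have hrw : ∀ w : ℝ, 0 ≤ w → w ^ ((1 - ε) * (m : ℝ)) = (w ^ (1 - ε)) ^ m := by
      intro w hw
      rw [Real.rpow_mul hw, Real.rpow_natCast]
    rw [hrw v hv0, hrw u (by linarith)]
    have hbase : ((1 - ε) * u + ε) * v ^ (1 - ε) ≤ u ^ (1 - ε) * ((1 - ε) * v + ε) := by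
      have hA := lemA9 ε (v / u) u hε0 hε1 (div_pos hvpos hupos)
        ((div_le_one hupos).2 hvu) hupos.le hu1
      have hdiv : (v / u) ^ (1 - ε) = v ^ (1 - ε) / u ^ (1 - ε) :=
        Real.div_rpow hv0 hupos.le _
      rw [hdiv] at hA
      have hA' := mul_le_mul_of_nonneg_left hA hur.le
      have hmulv : u * (v / u) = v := by field_simp
      rw [hmulv] at hA'
      have hcancel : u ^ (1 - ε) * (((1 - ε) * u + ε) * (v ^ (1 - ε) / u ^ (1 - ε)))
          = ((1 - ε) * u + ε) * v ^ (1 - ε) := by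
        rw [mul_comm, mul_assoc, div_mul_cancel₀ _ hur.ne']
      rw [hcancel] at hA'
      exact hA'
    calc ((1 - ε) * u + ε) ^ m * (v ^ (1 - ε)) ^ m
        = (((1 - ε) * u + ε) * v ^ (1 - ε)) ^ m := (mul_pow _ _ _).symm
      _ ≤ (u ^ (1 - ε) * ((1 - ε) * v + ε)) ^ m := by
          have hvr : (0:ℝ) ≤ v ^ (1 - ε) := Real.rpow_nonneg hv0 _
          exact pow_le_pow_left₀ (mul_nonneg (by nlinarith) hvr) hbase m
      _ = (u ^ (1 - ε)) ^ m * ((1 - ε) * v + ε) ^ m := mul_pow _ _ _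

/-- For real `0 ≤ ε < 1`, naturals `1 ≤ m ≤ n`, and
`f r = ((1 − ε)(1 − r) + ε)^m r^(n−m)`, `g r = (1 − r)^((1−ε)m) r^(n−m)`
(the first power in `g` a real power), the probability measure with density
proportional to `f` stochastically dominates the one with density proportional
to `g`: for every `x ∈ [0, 1]`,
`(∫₀ˣ f)·(∫₀¹ g) ≤ (∫₀ˣ g)·(∫₀¹ f)`. -/
theorem stmt_9 (ε : ℝ) (hε0 : 0 ≤ ε) (hε1 : ε < 1) (n m : ℕ)
    (hm : 1 ≤ m) (hmn : m ≤ n) (x : ℝ) (hx : x ∈ Set.Icc (0 : ℝ) 1) :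
    (∫ r in (0:ℝ)..x, ((1 - ε) * (1 - r) + ε) ^ m * r ^ (n - m)) *
        (∫ r in (0:ℝ)..1, (1 - r) ^ ((1 - ε) * (m : ℝ)) * r ^ (n - m)) ≤
      (∫ r in (0:ℝ)..x, (1 - r) ^ ((1 - ε) * (m : ℝ)) * r ^ (n - m)) *
        (∫ r in (0:ℝ)..1, ((1 - ε) * (1 - r) + ε) ^ m * r ^ (n - m)) := by
  obtain ⟨hx0, hx1⟩ := hx
  set k := n - m with hk
  set f : ℝ → ℝ := fun r => ((1 - ε) * (1 - r) + ε) ^ m * r ^ k with hf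
  set g : ℝ → ℝ := fun r => (1 - r) ^ ((1 - ε) * (m : ℝ)) * r ^ k with hg
  have hcf : Continuous f := by
    apply Continuous.mul _ (continuous_pow k)
    exact (((continuous_const.mul (continuous_const.sub continuous_id')).add
      continuous_const).pow m)
  have hcg : Continuous g := by
    apply Continuous.mul _ (continuous_pow k)
    have hexp : (0:ℝ) ≤ (1 - ε) * (m : ℝ) := by
      have h1 : (0:ℝ) ≤ 1 - ε := by linarith
      positivity
    exact (Real.continuous_rpow_const hexp).comp (continuous_const.sub continuous_id')
  have hif : ∀ a b : ℝ, IntervalIntegrable f volume a b :=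
    fun a b => hcf.intervalIntegrable a b
  have hig : ∀ a b : ℝ, IntervalIntegrable g volume a b :=
    fun a b => hcg.intervalIntegrable a b
  have hsplitf : (∫ r in (0:ℝ)..x, f r) + (∫ r in x..1, f r) = ∫ r in (0:ℝ)..1, f r :=
    intervalIntegral.integral_add_adjacent_intervals (hif 0 x) (hif x 1)
  have hsplitg : (∫ r in (0:ℝ)..x, g r) + (∫ r in x..1, g r) = ∫ r in (0:ℝ)..1, g r :=
    intervalIntegral.integral_add_adjacent_intervals (hig 0 x) (hig x 1)
  rw [← hsplitf, ← hsplitg]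
  set F := ∫ r in (0:ℝ)..x, f r
  set G := ∫ r in (0:ℝ)..x, g r
  set Ft := ∫ r in x..1, f r
  set Gt := ∫ r in x..1, g r
  have key : F * Gt ≤ G * Ft := by
    rcases hx0.eq_or_lt with rfl | hx0'
    · have hF : F = 0 := intervalIntegral.integral_same
      have hG : G = 0 := intervalIntegral.integral_same
      rw [hF, hG]; simp
    rcases hx1.eq_or_lt with rfl | hx1'
    · have hFt : Ft = 0 := intervalIntegral.integral_same
      have hGt : Gt = 0 := intervalIntegral.integral_same
      rw [hFt, hGt]; simp
    -- 0 < x < 1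
    have hfx : 0 < f x := by
      have h1 : 0 < (1 - ε) * (1 - x) + ε := by nlinarith
      have h2 : 0 < x ^ k := pow_pos hx0' k
      exact mul_pos (pow_pos h1 m) h2
    have hgx : 0 < g x := by
      have h1 : (0:ℝ) < (1 - x) ^ ((1 - ε) * (m : ℝ)) :=
        Real.rpow_pos_of_pos (by linarith) _
      exact mul_pos h1 (pow_pos hx0' k)
    have key1 : F * g x ≤ G * f x := by
      have hmono : ∀ s ∈ Set.Icc (0:ℝ) x, f s * g x ≤ g s * f x := by
        intro s hs
        have hB := lemB9 ε hε0 hε1 m hm s x hs.1 hs.2 hx1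
        have hnn : (0:ℝ) ≤ s ^ k * x ^ k :=
          mul_nonneg (pow_nonneg hs.1 k) (pow_nonneg hx0 k)
        have := mul_le_mul_of_nonneg_right hB hnn
        simp only [hf, hg]
        nlinarith [this]
      calc F * g x = ∫ s in (0:ℝ)..x, f s * g x := by
            rw [intervalIntegral.integral_mul_const]
        _ ≤ ∫ s in (0:ℝ)..x, g s * f x := by
            apply intervalIntegral.integral_mono_on hx0
              ((hcf.mul continuous_const).intervalIntegrable _ _)
              ((hcg.mul continuous_const).intervalIntegrable _ _) hmono
        _ = G * f x := by rw [intervalIntegral.integral_mul_const]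
    have key2 : Gt * f x ≤ Ft * g x := by
      have hmono : ∀ t ∈ Set.Icc x 1, g t * f x ≤ f t * g x := by
        intro t ht
        have hB := lemB9 ε hε0 hε1 m hm x t hx0 ht.1 ht.2
        have hnn : (0:ℝ) ≤ x ^ k * t ^ k :=
          mul_nonneg (pow_nonneg hx0 k) (pow_nonneg (le_trans hx0 ht.1) k)
        have := mul_le_mul_of_nonneg_right hB hnn
        simp only [hf, hg]
        nlinarith [this]
      calc Gt * f x = ∫ t in x..1, g t * f x := by
            rw [intervalIntegral.integral_mul_const]
        _ ≤ ∫ t in x..1, f t * g x := by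
            apply intervalIntegral.integral_mono_on hx1
              ((hcg.mul continuous_const).intervalIntegrable _ _)
              ((hcf.mul continuous_const).intervalIntegrable _ _) hmono
        _ = Ft * g x := by rw [intervalIntegral.integral_mul_const]
    have hGnn : 0 ≤ G * f x := by
      apply mul_nonneg _ hfx.le
      apply intervalIntegral.integral_nonneg hx0
      intro u hu
      exact mul_nonneg (Real.rpow_nonneg (by linarith [hu.2]) _) (pow_nonneg hu.1 k)
    have hGtnn : 0 ≤ Gt * f x := by
      apply mul_nonneg _ hfx.le
      apply intervalIntegral.integral_nonneg hx1
      intro u hu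
      exact mul_nonneg (Real.rpow_nonneg (by linarith [hu.2]) _)
        (pow_nonneg (le_trans hx0 hu.1) k)
    have hmm := mul_le_mul key1 key2 hGtnn hGnn
    have hpos : 0 < f x * g x := mul_pos hfx hgx
    have h3 : F * Gt * (f x * g x) ≤ G * Ft * (f x * g x) := by nlinarith [hmm]
    exact le_of_mul_le_mul_right h3 hpos
  nlinarith [key]
end

section
/- Let p : ℝ → ℝ be a nonnegative measurable function on [0, 1] with 0 < ∫₀¹ p(r) dr < ∞, and let n, m, m′ be naturals with m < m′ ≤ n. Assume ∫₀¹ (1 − r)^m r^{n−m} p(r) dr > 0 and ∫₀¹ (1 − r)^{m′} r^{n−m′} p(r) dr > 0. Then for every x ∈ [0, 1]: (∫₀ˣ (1 − r)^{m′} r^{n−m′} p(r) dr)·(∫₀¹ (1 − r)^m r^{n−m} p(r) dr) ≥ (∫₀ˣ (1 − r)^m r^{n−m} p(r) dr)·(∫₀¹ (1 − r)^{m′} r^{n−m′} p(r) dr). That is, the posterior of the error rate r given M = m′ correct edits is stochastically dominated by the posterior given M = m correct edits. -/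
open MeasureTheory intervalIntegral


/-- Let `p` be a nonnegative measurable function on `[0, 1]` with
`0 < ∫₀¹ p < ∞` (finiteness expressed as interval integrability), and let
`m < m′ ≤ n` with both weighted normalizing integrals positive. Then for every
`x ∈ [0, 1]`, the posterior given `M = m′` is stochastically dominated by the
posterior given `M = m`:
`(∫₀ˣ (1−r)^{m′} r^{n−m′} p)·(∫₀¹ (1−r)^m r^{n−m} p) ≥ (∫₀ˣ (1−r)^m r^{n−m} p)·(∫₀¹ (1−r)^{m′} r^{n−m′} p)`. -/
theorem stmt_10 (p : ℝ → ℝ) (hp : Measurable p)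
    (hp0 : ∀ r ∈ Set.Icc (0 : ℝ) 1, 0 ≤ p r)
    (hpint : IntervalIntegrable p volume 0 1)
    (hppos : 0 < ∫ r in (0:ℝ)..1, p r)
    (n m m' : ℕ) (hmm' : m < m') (hm'n : m' ≤ n)
    (hpos : 0 < ∫ r in (0:ℝ)..1, (1 - r) ^ m * r ^ (n - m) * p r)
    (hpos' : 0 < ∫ r in (0:ℝ)..1, (1 - r) ^ m' * r ^ (n - m') * p r)
    (x : ℝ) (hx : x ∈ Set.Icc (0 : ℝ) 1) :
    (∫ r in (0:ℝ)..x, (1 - r) ^ m' * r ^ (n - m') * p r) *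
        (∫ r in (0:ℝ)..1, (1 - r) ^ m * r ^ (n - m) * p r) ≥
      (∫ r in (0:ℝ)..x, (1 - r) ^ m * r ^ (n - m) * p r) *
        (∫ r in (0:ℝ)..1, (1 - r) ^ m' * r ^ (n - m') * p r) := by
  obtain ⟨hx0, hx1⟩ := hx
  set k := m' - m with hk
  have hkpos : 0 < k := Nat.sub_pos_of_lt hmm'
  have hm' : m' = m + k := by omega
  have hnm : n - m = (n - m') + k := by omega
  -- pointwise factorizations
  have hfe : ∀ r : ℝ, (1-r)^m' * r^(n-m') * p r = ((1-r)^m * r^(n-m') * p r) * (1-r)^k := by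
    intro r; rw [hm', pow_add]; ring
  have hge : ∀ r : ℝ, (1-r)^m * r^(n-m) * p r = ((1-r)^m * r^(n-m') * p r) * r^k := by
    intro r; rw [hnm, pow_add]; ring
  -- integrability of weighted functions on [0,1]
  have hint : ∀ (a b : ℕ), IntervalIntegrable (fun r => (1-r)^a * r^b * p r) volume 0 1 := by
    intro a b
    exact hpint.continuousOn_mul (by fun_prop)
  have hsub1 : Set.uIcc (0:ℝ) x ⊆ Set.uIcc (0:ℝ) 1 := by
    rw [Set.uIcc_of_le hx0, Set.uIcc_of_le (by norm_num : (0:ℝ) ≤ 1)]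
    exact Set.Icc_subset_Icc le_rfl hx1
  have hsub2 : Set.uIcc x (1:ℝ) ⊆ Set.uIcc (0:ℝ) 1 := by
    rw [Set.uIcc_of_le hx1, Set.uIcc_of_le (by norm_num : (0:ℝ) ≤ 1)]
    exact Set.Icc_subset_Icc hx0 le_rfl
  have hintg1 : IntervalIntegrable (fun r => (1-r)^m * r^(n-m) * p r) volume 0 x :=
    (hint m (n-m)).mono_set hsub1
  have hintg2 : IntervalIntegrable (fun r => (1-r)^m * r^(n-m) * p r) volume x 1 :=
    (hint m (n-m)).mono_set hsub2
  have hintf1 : IntervalIntegrable (fun r => (1-r)^m' * r^(n-m') * p r) volume 0 x :=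
    (hint m' (n-m')).mono_set hsub1
  have hintf2 : IntervalIntegrable (fun r => (1-r)^m' * r^(n-m') * p r) volume x 1 :=
    (hint m' (n-m')).mono_set hsub2
  -- split total integrals
  have hsplitg : (∫ r in (0:ℝ)..1, (1-r)^m * r^(n-m) * p r)
      = (∫ r in (0:ℝ)..x, (1-r)^m * r^(n-m) * p r) + ∫ r in x..1, (1-r)^m * r^(n-m) * p r :=
    (integral_add_adjacent_intervals hintg1 hintg2).symm
  have hsplitf : (∫ r in (0:ℝ)..1, (1-r)^m' * r^(n-m') * p r)
      = (∫ r in (0:ℝ)..x, (1-r)^m' * r^(n-m') * p r) + ∫ r in x..1, (1-r)^m' * r^(n-m') * p r :=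
    (integral_add_adjacent_intervals hintf1 hintf2).symm
  set A' := ∫ r in (0:ℝ)..x, (1-r)^m' * r^(n-m') * p r with hA'
  set A := ∫ r in (0:ℝ)..x, (1-r)^m * r^(n-m) * p r with hA
  set B' := ∫ r in x..1, (1-r)^m' * r^(n-m') * p r with hB'
  set B := ∫ r in x..1, (1-r)^m * r^(n-m) * p r with hB
  -- nonnegativity
  have hnng : ∀ r ∈ Set.Icc (0:ℝ) 1, 0 ≤ (1-r)^m * r^(n-m) * p r := by
    intro r hr
    exact mul_nonneg (mul_nonneg (pow_nonneg (by linarith [hr.2]) _)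
      (pow_nonneg hr.1 _)) (hp0 r hr)
  have hAnn : 0 ≤ A :=
    integral_nonneg hx0 (fun r hr => hnng r ⟨hr.1, le_trans hr.2 hx1⟩)
  have hBnn : 0 ≤ B :=
    integral_nonneg hx1 (fun r hr => hnng r ⟨le_trans hx0 hr.1, hr.2⟩)
  -- key comparison 1 on [0,x]
  have h1 : A * (1-x)^k ≤ A' * x^k := by
    rw [hA, hA', ← intervalIntegral.integral_mul_const, ← intervalIntegral.integral_mul_const]
    apply integral_mono_on hx0 (hintg1.mul_const _) (hintf1.mul_const _)
    intro r hr
    obtain ⟨hr0, hrx⟩ := hr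
    have hr1 : r ≤ 1 := le_trans hrx hx1
    have hpr := hp0 r ⟨hr0, hr1⟩
    have key : (r * (1-x))^k ≤ ((1-r) * x)^k :=
      pow_le_pow_left₀ (by nlinarith) (by nlinarith) k
    have hcomm : 0 ≤ (1-r)^m * r^(n-m') * p r :=
      mul_nonneg (mul_nonneg (pow_nonneg (by linarith) _) (pow_nonneg hr0 _)) hpr
    calc (1-r)^m * r^(n-m) * p r * (1-x)^k
        = ((1-r)^m * r^(n-m') * p r) * (r * (1-x))^k := by
          rw [hge r, mul_pow]; ring
      _ ≤ ((1-r)^m * r^(n-m') * p r) * ((1-r) * x)^k :=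
          mul_le_mul_of_nonneg_left key hcomm
      _ = (1-r)^m' * r^(n-m') * p r * x^k := by
          rw [hfe r, mul_pow]; ring
  -- key comparison 2 on [x,1]
  have h2 : B' * x^k ≤ B * (1-x)^k := by
    rw [hB, hB', ← intervalIntegral.integral_mul_const, ← intervalIntegral.integral_mul_const]
    apply integral_mono_on hx1 (hintf2.mul_const _) (hintg2.mul_const _)
    intro r hr
    obtain ⟨hxr, hr1⟩ := hr
    have hr0 : 0 ≤ r := le_trans hx0 hxr
    have hpr := hp0 r ⟨hr0, hr1⟩
    have key : ((1-r) * x)^k ≤ (r * (1-x))^k :=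
      pow_le_pow_left₀ (by nlinarith) (by nlinarith) k
    have hcomm : 0 ≤ (1-r)^m * r^(n-m') * p r :=
      mul_nonneg (mul_nonneg (pow_nonneg (by linarith) _) (pow_nonneg hr0 _)) hpr
    calc (1-r)^m' * r^(n-m') * p r * x^k
        = ((1-r)^m * r^(n-m') * p r) * ((1-r) * x)^k := by
          rw [hfe r, mul_pow]; ring
      _ ≤ ((1-r)^m * r^(n-m') * p r) * (r * (1-x))^k :=
          mul_le_mul_of_nonneg_left key hcomm
      _ = (1-r)^m * r^(n-m) * p r * (1-x)^k := by
          rw [hge r, mul_pow]; ring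
  rw [hsplitg, hsplitf, ge_iff_le]
  rcases eq_or_lt_of_le hx0 with hx0' | hx0'
  · have hA0 : A = 0 := by rw [hA, ← hx0', integral_same]
    have hA'0 : A' = 0 := by rw [hA', ← hx0', integral_same]
    rw [hA0, hA'0]
    norm_num
  · have hxk : 0 < x^k := pow_pos hx0' k
    have h3 := mul_le_mul_of_nonneg_right h1 hBnn
    have h4 := mul_le_mul_of_nonneg_right h2 hAnn
    nlinarith [mul_pos hxk hxk]
end

section
/- Let p : ℝ → ℝ be a nonnegative measurable function on [0, 1] and let n, m, m′ be naturals with m < m′ ≤ n, such that ∫₀¹ (1 − r)^m r^{n−m} p(r) dr > 0 and ∫₀¹ (1 − r)^{m′} r^{n−m′} p(r) dr > 0. Then the posterior mean of r is nonincreasing in the number of correct edits: (∫₀¹ r (1 − r)^{m′} r^{n−m′} p(r) dr) / (∫₀¹ (1 − r)^{m′} r^{n−m′} p(r) dr) ≤ (∫₀¹ r (1 − r)^m r^{n−m} p(r) dr) / (∫₀¹ (1 − r)^m r^{n−m} p(r) dr). -/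
open MeasureTheory

/-- Let `p` be a nonnegative measurable function on `[0, 1]` and
`m < m′ ≤ n` with both normalizing integrals positive. Then the posterior mean
of `r` is nonincreasing in the number of correct edits:
`E[r | M = m′] ≤ E[r | M = m]`. -/
theorem stmt_11 (p : ℝ → ℝ) (hp : Measurable p)
    (hp0 : ∀ r ∈ Set.Icc (0 : ℝ) 1, 0 ≤ p r)
    (hpint : IntervalIntegrable p volume 0 1)
    (n m m' : ℕ) (hmm' : m < m') (hm'n : m' ≤ n)
    (hpos : 0 < ∫ r in (0:ℝ)..1, (1 - r) ^ m * r ^ (n - m) * p r)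
    (hpos' : 0 < ∫ r in (0:ℝ)..1, (1 - r) ^ m' * r ^ (n - m') * p r) :
    (∫ r in (0:ℝ)..1, r * ((1 - r) ^ m' * r ^ (n - m')) * p r) /
        (∫ r in (0:ℝ)..1, (1 - r) ^ m' * r ^ (n - m') * p r) ≤
      (∫ r in (0:ℝ)..1, r * ((1 - r) ^ m * r ^ (n - m)) * p r) /
        (∫ r in (0:ℝ)..1, (1 - r) ^ m * r ^ (n - m) * p r) := by
  set μ : Measure ℝ := volume.restrict (Set.Ioc (0:ℝ) 1) with hμ_def
  -- convert interval integrals to set integrals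
  have hio : ∀ f : ℝ → ℝ, (∫ r in (0:ℝ)..1, f r) = ∫ r, f r ∂μ := fun f => by
    rw [intervalIntegral.integral_of_le zero_le_one]
  rw [hio] at hpos
  rw [hio] at hpos'
  rw [hio, hio, hio, hio]
  set w : ℝ → ℝ := fun r => (1 - r) ^ m * r ^ (n - m) * p r with hw_def
  set w' : ℝ → ℝ := fun r => (1 - r) ^ m' * r ^ (n - m') * p r with hw'_def
  -- integrability of w and w'
  have hwmeas : Measurable w := by fun_prop
  have hw'meas : Measurable w' := by fun_prop
  have hw : Integrable w μ := by
    by_contra h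
    rw [integral_undef h] at hpos; exact lt_irrefl 0 hpos
  have hw' : Integrable w' μ := by
    by_contra h
    rw [integral_undef h] at hpos'; exact lt_irrefl 0 hpos'
  have haemem : ∀ᵐ r ∂μ, r ∈ Set.Ioc (0:ℝ) 1 :=
    ae_restrict_mem measurableSet_Ioc
  have hrw : Integrable (fun r => r * w r) μ := by
    refine hw.abs.mono' (measurable_id.mul hwmeas).aestronglyMeasurable ?_
    filter_upwards [haemem] with r hr
    rw [Real.norm_eq_abs, abs_mul]
    calc |r| * |w r| ≤ 1 * |w r| := by
          apply mul_le_mul_of_nonneg_right _ (abs_nonneg _)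
          rw [abs_le]; constructor <;> linarith [hr.1, hr.2]
      _ = |w r| := one_mul _
  have hrw' : Integrable (fun r => r * w' r) μ := by
    refine hw'.abs.mono' (measurable_id.mul hw'meas).aestronglyMeasurable ?_
    filter_upwards [haemem] with r hr
    rw [Real.norm_eq_abs, abs_mul]
    calc |r| * |w' r| ≤ 1 * |w' r| := by
          apply mul_le_mul_of_nonneg_right _ (abs_nonneg _)
          rw [abs_le]; constructor <;> linarith [hr.1, hr.2]
      _ = |w' r| := one_mul _
  -- nonnegativity of w, w' on Ioc
  have hwnn : ∀ r ∈ Set.Ioc (0:ℝ) 1, 0 ≤ w r := by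
    intro r hr
    exact mul_nonneg (mul_nonneg (pow_nonneg (by linarith [hr.2]) _)
      (pow_nonneg hr.1.le _)) (hp0 r ⟨hr.1.le, hr.2⟩)
  have hw'nn : ∀ r ∈ Set.Ioc (0:ℝ) 1, 0 ≤ w' r := by
    intro r hr
    exact mul_nonneg (mul_nonneg (pow_nonneg (by linarith [hr.2]) _)
      (pow_nonneg hr.1.le _)) (hp0 r ⟨hr.1.le, hr.2⟩)
  -- relation w' = w * h
  set k : ℕ := m' - m with hk_def
  have hw'eq : ∀ r ∈ Set.Ioc (0:ℝ) 1, w' r = w r * ((1 - r) / r) ^ k := by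
    intro r hr
    have hr0 : (r:ℝ) ≠ 0 := ne_of_gt hr.1
    have h1 : m' = m + k := by omega
    have h2 : n - m = (n - m') + k := by omega
    simp only [hw_def, hw'_def, h1, h2, pow_add, div_pow]
    field_simp
  -- key pointwise inequality
  have key : ∀ r ∈ Set.Ioc (0:ℝ) 1, ∀ s ∈ Set.Ioc (0:ℝ) 1,
      0 ≤ (r - s) * (w r * w' s - w' r * w s) := by
    intro r hr s hs
    rw [hw'eq r hr, hw'eq s hs]
    have hrs : (r - s) * (w r * (w s * ((1 - s) / s) ^ k) -
        w r * ((1 - r) / r) ^ k * w s) =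
        (w r * w s) * ((r - s) * (((1 - s) / s) ^ k - ((1 - r) / r) ^ k)) := by ring
    rw [hrs]
    refine mul_nonneg (mul_nonneg (hwnn r hr) (hwnn s hs)) ?_
    rcases le_total r s with h | h
    · have hh : ((1 - s) / s) ^ k ≤ ((1 - r) / r) ^ k := by
        apply pow_le_pow_left₀ (div_nonneg (by linarith [hs.2]) hs.1.le)
        rw [div_le_div_iff₀ hs.1 hr.1]; nlinarith [hr.1, hs.1]
      nlinarith [hh, h]
    · have hh : ((1 - r) / r) ^ k ≤ ((1 - s) / s) ^ k := by
        apply pow_le_pow_left₀ (div_nonneg (by linarith [hr.2]) hr.1.le)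
        rw [div_le_div_iff₀ hr.1 hs.1]; nlinarith [hr.1, hs.1]
      nlinarith [hh, h]
  -- the double-integral argument
  set π : Measure (ℝ × ℝ) := μ.prod μ with hπ_def
  have haemem2 : ∀ᵐ z ∂π, z.1 ∈ Set.Ioc (0:ℝ) 1 ∧ z.2 ∈ Set.Ioc (0:ℝ) 1 := by
    have : π = (volume.prod volume).restrict
        (Set.Ioc (0:ℝ) 1 ×ˢ Set.Ioc (0:ℝ) 1) := by
      rw [hπ_def, hμ_def, Measure.prod_restrict]
    rw [this]
    filter_upwards [ae_restrict_mem (measurableSet_Ioc.prod measurableSet_Ioc)]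
      with z hz using hz
  have hI1 : Integrable (fun z : ℝ × ℝ => z.1 * w z.1 * w' z.2) π := hrw.mul_prod hw'
  have hI2 : Integrable (fun z : ℝ × ℝ => z.1 * w' z.1 * w z.2) π := hrw'.mul_prod hw
  have hD1 : (∫ r, r * w r ∂μ) * (∫ s, w' s ∂μ)
      = ∫ z : ℝ × ℝ, z.1 * w z.1 * w' z.2 ∂π := (integral_prod_mul _ _).symm
  have hD2 : (∫ r, r * w' r ∂μ) * (∫ s, w s ∂μ)
      = ∫ z : ℝ × ℝ, z.1 * w' z.1 * w z.2 ∂π := (integral_prod_mul _ _).symm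
  have hswap : ∫ z : ℝ × ℝ, (z.1 * w z.1 * w' z.2 - z.1 * w' z.1 * w z.2) ∂π
      = ∫ z : ℝ × ℝ, (z.2 * w z.2 * w' z.1 - z.2 * w' z.2 * w z.1) ∂π := by
    rw [hπ_def]
    exact (integral_prod_swap
      (fun z : ℝ × ℝ => z.1 * w z.1 * w' z.2 - z.1 * w' z.1 * w z.2)).symm
  have hDnn : 0 ≤ (∫ r, r * w r ∂μ) * (∫ s, w' s ∂μ)
      - (∫ r, r * w' r ∂μ) * (∫ s, w s ∂μ) := by
    rw [hD1, hD2, ← integral_sub hI1 hI2]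
    have h2D : (2:ℝ) * ∫ z : ℝ × ℝ, (z.1 * w z.1 * w' z.2 - z.1 * w' z.1 * w z.2) ∂π
        = ∫ z : ℝ × ℝ, (z.1 - z.2) * (w z.1 * w' z.2 - w' z.1 * w z.2) ∂π := by
      have hsubI : Integrable
          (fun z : ℝ × ℝ => z.1 * w z.1 * w' z.2 - z.1 * w' z.1 * w z.2) π :=
        hI1.sub hI2
      have hsubI2 : Integrable
          (fun z : ℝ × ℝ => z.2 * w z.2 * w' z.1 - z.2 * w' z.2 * w z.1) π :=
        (hw'.mul_prod hrw).sub (hw.mul_prod hrw') |>.congr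
          (by filter_upwards with z; simp only [Pi.sub_apply]; ring)
      rw [two_mul]
      nth_rewrite 2 [hswap]
      rw [← integral_add hsubI hsubI2]
      apply integral_congr_ae
      filter_upwards with z
      ring
    have hpos2 : 0 ≤ ∫ z : ℝ × ℝ, (z.1 - z.2) * (w z.1 * w' z.2 - w' z.1 * w z.2) ∂π := by
      apply integral_nonneg_of_ae
      filter_upwards [haemem2] with z hz
      exact key z.1 hz.1 z.2 hz.2
    linarith
  have eq1 : ∫ r, r * ((1 - r) ^ m * r ^ (n - m)) * p r ∂μ = ∫ r, r * w r ∂μ := by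
    apply integral_congr_ae; filter_upwards with r; simp only [hw_def]; ring
  have eq2 : ∫ r, r * ((1 - r) ^ m' * r ^ (n - m')) * p r ∂μ = ∫ r, r * w' r ∂μ := by
    apply integral_congr_ae; filter_upwards with r; simp only [hw'_def]; ring
  rw [div_le_div_iff₀ hpos' hpos, eq1, eq2]
  linarith
end

section
/- Let p : ℝ → ℝ be a nonnegative measurable function on [0, 1] with ∫₀¹ p(r) dr = 1, and let a be a real number with 0 < a ≤ 2 such that p(r) ≥ a for every r ∈ [0, 1/2]. Let n, m be naturals with m ≤ n, and let M = sup_{r ∈ [1/2, 1]} (n choose m)·(r − 1/2)(1 − r)^m r^{n−m}. Then (n choose m) · ∫₀¹ (1/2 − r)(1 − r)^m r^{n−m} p(r) dr ≥ a·(2m − n)/(2(n+1)(n+2)) − M·(1 − a/2). -/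
open MeasureTheory


lemma prod_fact (a b : ℕ) :
    (a.factorial : ℂ) * ∏ j ∈ Finset.range (b + 1), ((a : ℂ) + 1 + j)
      = ((a + b + 1).factorial : ℂ) := by
  induction b with
  | zero =>
    rw [show a + 0 + 1 = a + 1 from by ring, Nat.factorial_succ]
    simp; push_cast; ring
  | succ b ih =>
    rw [Finset.prod_range_succ, ← mul_assoc, ih,
      show a + (b+1) + 1 = (a + b + 1) + 1 from by ring, Nat.factorial_succ (a+b+1)]
    push_cast; ring

lemma beta_nat (a b : ℕ) :
    ∫ x in (0:ℝ)..1, x ^ a * (1 - x) ^ b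
      = (a.factorial * b.factorial : ℝ) / (a + b + 1).factorial := by
  have h := Complex.betaIntegral_eval_nat_add_one_right
    (u := (a + 1 : ℂ)) (by simp; positivity) b
  rw [Complex.betaIntegral] at h
  have heq : ∀ x : ℝ, x ∈ Set.uIcc (0:ℝ) 1 →
      (x : ℂ) ^ ((a:ℂ) + 1 - 1) * ((1:ℂ) - x) ^ (((b:ℂ)+1) - 1)
        = ((x ^ a * (1 - x) ^ b : ℝ) : ℂ) := by
    intro x hx
    have h1 : ((a:ℂ) + 1 - 1) = ((a : ℕ) : ℂ) := by ring
    have h2 : (((b:ℂ)+1) - 1) = ((b : ℕ) : ℂ) := by ring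
    rw [h1, h2, Complex.cpow_natCast, Complex.cpow_natCast]
    push_cast; ring
  rw [intervalIntegral.integral_congr heq, intervalIntegral.integral_ofReal] at h
  have hprod := prod_fact a b
  have ha : (a.factorial : ℂ) ≠ 0 := Nat.cast_ne_zero.2 a.factorial_ne_zero
  have hab : ((a + b + 1).factorial : ℂ) ≠ 0 := Nat.cast_ne_zero.2 (Nat.factorial_ne_zero _)
  have hprodne : (∏ j ∈ Finset.range (b + 1), ((a : ℂ) + 1 + j)) ≠ 0 := by
    intro h0; exact hab (by rw [← hprod, h0, mul_zero])
  apply Complex.ofReal_injective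
  rw [h]
  push_cast
  rw [div_eq_div_iff hprodne hab, ← hprod]
  ring

lemma key_int (n m : ℕ) (hmn : m ≤ n) :
    (n.choose m : ℝ) * ∫ r in (0:ℝ)..1, (1/2 - r) * (1 - r) ^ m * r ^ (n - m)
      = (2 * (m : ℝ) - n) / (2 * ((n : ℝ) + 1) * ((n : ℝ) + 2)) := by
  have hsplit : ∀ r ∈ Set.uIcc (0:ℝ) 1, ((fun r : ℝ => (1/2 - r) * (1 - r) ^ m * r ^ (n - m)) r)
      = ((fun r : ℝ => (1/2) * (r ^ (n-m) * (1 - r) ^ m) - r ^ (n-m+1) * (1 - r) ^ m) r) := by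
    intro r _; simp only [pow_succ]; ring
  rw [intervalIntegral.integral_congr hsplit, intervalIntegral.integral_sub
      ((by continuity : Continuous fun r:ℝ => (1/2:ℝ) * (r ^ (n-m) * (1 - r) ^ m)).intervalIntegrable 0 1)
      ((by continuity : Continuous fun r:ℝ => r ^ (n-m+1) * (1 - r) ^ m).intervalIntegrable 0 1),
    intervalIntegral.integral_const_mul, beta_nat, beta_nat,
    show n - m + m + 1 = n + 1 from by omega, show n - m + 1 + m + 1 = n + 2 from by omega]
  have hc : (n.choose m : ℝ) * ((m.factorial : ℝ) * ((n-m).factorial : ℝ)) = (n.factorial : ℝ) := by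
    have := Nat.choose_mul_factorial_mul_factorial hmn
    push_cast [← this]; ring
  have hf1 : ((n+1).factorial : ℝ) = ((n:ℝ)+1) * n.factorial := by
    rw [Nat.factorial_succ]; push_cast; ring
  have hf2 : ((n+2).factorial : ℝ) = ((n:ℝ)+2) * (((n:ℝ)+1) * n.factorial) := by
    rw [show n+2 = (n+1)+1 from rfl, Nat.factorial_succ]; push_cast [hf1]; ring
  have hf3 : ((n-m+1).factorial : ℝ) = ((n:ℝ)-(m:ℝ)+1) * ((n-m).factorial : ℝ) := by
    rw [Nat.factorial_succ]; push_cast [Nat.cast_sub hmn]; ring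
  rw [hf1, hf2, hf3, ← hc]
  have h1 : ((n:ℝ)+1) ≠ 0 := by positivity
  have h2 : ((n:ℝ)+2) ≠ 0 := by positivity
  have h3 : (n.choose m : ℝ) ≠ 0 := Nat.cast_ne_zero.2 (Nat.choose_pos hmn).ne'
  have h4 : (m.factorial : ℝ) ≠ 0 := Nat.cast_ne_zero.2 m.factorial_ne_zero
  have h5 : ((n-m).factorial : ℝ) ≠ 0 := Nat.cast_ne_zero.2 (n-m).factorial_ne_zero
  field_simp
  ring

/-- Let `p` be a nonnegative measurable density on `[0, 1]` with
`∫₀¹ p = 1`, and `0 < a ≤ 2` with `p(r) ≥ a` on `[0, 1/2]`. For naturals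
`m ≤ n`, with `M = sup_{r ∈ [1/2,1]} (n choose m)(r − 1/2)(1 − r)^m r^(n−m)`,
`(n choose m) · ∫₀¹ (1/2 − r)(1 − r)^m r^(n−m) p(r) dr ≥ a(2m − n)/(2(n+1)(n+2)) − M(1 − a/2)`. -/
theorem stmt_12 (p : ℝ → ℝ) (hp : Measurable p)
    (hp0 : ∀ r ∈ Set.Icc (0 : ℝ) 1, 0 ≤ p r)
    (hpint : IntervalIntegrable p volume 0 1)
    (hp1 : ∫ r in (0:ℝ)..1, p r = 1)
    (a : ℝ) (ha0 : 0 < a) (ha2 : a ≤ 2)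
    (hpa : ∀ r ∈ Set.Icc (0 : ℝ) (1/2), a ≤ p r)
    (n m : ℕ) (hmn : m ≤ n) :
    (n.choose m : ℝ) *
        ∫ r in (0:ℝ)..1, (1/2 - r) * (1 - r) ^ m * r ^ (n - m) * p r ≥
      a * ((2 * (m : ℤ) - (n : ℤ) : ℤ) : ℝ) / (2 * ((n : ℝ) + 1) * ((n : ℝ) + 2)) -
        sSup ((fun r : ℝ => (n.choose m : ℝ) * (r - 1/2) * (1 - r) ^ m * r ^ (n - m)) ''
            Set.Icc (1/2 : ℝ) 1) *
          (1 - a / 2) := by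
  set f : ℝ → ℝ := fun r => (1/2 - r) * (1 - r) ^ m * r ^ (n - m) with hfdef
  set g : ℝ → ℝ := fun r => (n.choose m : ℝ) * (r - 1/2) * (1 - r) ^ m * r ^ (n - m) with hgdef
  set M := sSup (g '' Set.Icc (1/2:ℝ) 1) with hMdef
  set C := (n.choose m : ℝ) with hCdef
  have hC0 : (0:ℝ) ≤ C := Nat.cast_nonneg _
  have hfc : Continuous f := by fun_prop
  have hgc : Continuous g := by fun_prop
  have hsub1 : Set.uIcc (0:ℝ) (1/2) ⊆ Set.uIcc (0:ℝ) 1 := by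
    rw [Set.uIcc_of_le (by norm_num : (0:ℝ) ≤ 1/2), Set.uIcc_of_le (by norm_num : (0:ℝ) ≤ 1)]
    exact Set.Icc_subset_Icc_right (by norm_num)
  have hsub2 : Set.uIcc (1/2:ℝ) 1 ⊆ Set.uIcc (0:ℝ) 1 := by
    rw [Set.uIcc_of_le (by norm_num : (1/2:ℝ) ≤ 1), Set.uIcc_of_le (by norm_num : (0:ℝ) ≤ 1)]
    exact Set.Icc_subset_Icc_left (by norm_num)
  have hp_half : IntervalIntegrable p volume 0 (1/2) := hpint.mono_set hsub1
  have hp_half' : IntervalIntegrable p volume (1/2) 1 := hpint.mono_set hsub2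
  have hfp : IntervalIntegrable (fun r => f r * p r) volume 0 1 :=
    hpint.continuousOn_mul hfc.continuousOn
  have hfp1 : IntervalIntegrable (fun r => f r * p r) volume 0 (1/2) :=
    hp_half.continuousOn_mul hfc.continuousOn
  have hfp2 : IntervalIntegrable (fun r => f r * p r) volume (1/2) 1 :=
    hp_half'.continuousOn_mul hfc.continuousOn
  -- M facts
  have hbdd : BddAbove (g '' Set.Icc (1/2:ℝ) 1) := (isCompact_Icc.image hgc).bddAbove
  have hM0 : 0 ≤ M := by
    have h12 : (1/2:ℝ) ∈ Set.Icc (1/2:ℝ) 1 := by norm_num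
    have hg12 : g (1/2) = 0 := by norm_num [hgdef]
    exact hg12 ▸ le_csSup hbdd (Set.mem_image_of_mem g h12)
  have hMle : ∀ r ∈ Set.Icc (1/2:ℝ) 1, g r ≤ M :=
    fun r hr => le_csSup hbdd (Set.mem_image_of_mem g hr)
  -- p mass on [0,1/2]
  have hpa2 : a/2 ≤ ∫ r in (0:ℝ)..(1/2), p r := by
    have h := intervalIntegral.integral_mono_on (by norm_num : (0:ℝ) ≤ 1/2)
      (_root_.intervalIntegrable_const (c := a)) hp_half (fun x hx => hpa x hx)
    simp only [intervalIntegral.integral_const, smul_eq_mul, sub_zero] at h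
    linarith
  have hsplitp : (∫ r in (0:ℝ)..(1/2), p r) + ∫ r in (1/2:ℝ)..1, p r = 1 := by
    rw [intervalIntegral.integral_add_adjacent_intervals hp_half hp_half', hp1]
  have hp2 : ∫ r in (1/2:ℝ)..1, p r ≤ 1 - a/2 := by linarith
  -- A part : lower bound on [0,1/2]
  have hA : a * ∫ r in (0:ℝ)..(1/2), f r ≤ ∫ r in (0:ℝ)..(1/2), f r * p r := by
    rw [← intervalIntegral.integral_const_mul]
    apply intervalIntegral.integral_mono_on (by norm_num : (0:ℝ) ≤ 1/2)
      ((hfc.intervalIntegrable _ _).const_mul a) hfp1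
    intro x hx
    have hf0 : 0 ≤ f x := by
      apply mul_nonneg (mul_nonneg (by linarith [hx.2]) (pow_nonneg (by linarith [hx.2]) m))
        (pow_nonneg hx.1 _)
    have hpx := hpa x hx
    nlinarith
  -- f integral on [1/2,1] nonpositive
  have hff : ∫ r in (1/2:ℝ)..1, f r ≤ 0 := by
    have h := intervalIntegral.integral_mono_on (by norm_num : (1/2:ℝ) ≤ 1)
      (hfc.intervalIntegrable _ _) (_root_.intervalIntegrable_const (μ := volume) (c := (0:ℝ)))
      (fun x hx => by
        have : f x = -((x - 1/2) * (1 - x) ^ m * x ^ (n - m)) := by simp [hfdef]; ring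
        rw [this]
        simp only [neg_nonpos]
        exact mul_nonneg (mul_nonneg (by linarith [hx.1]) (pow_nonneg (by linarith [hx.2]) m))
          (pow_nonneg (by linarith [hx.1]) _)
      )
    simpa using h
  have hsplitf : (∫ r in (0:ℝ)..(1/2), f r) + ∫ r in (1/2:ℝ)..1, f r
      = ∫ r in (0:ℝ)..1, f r :=
    intervalIntegral.integral_add_adjacent_intervals (hfc.intervalIntegrable _ _)
      (hfc.intervalIntegrable _ _)
  have h1 : (∫ r in (0:ℝ)..1, f r) ≤ ∫ r in (0:ℝ)..(1/2), f r := by linarith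
  -- B part : lower bound on [1/2,1]
  have hB : (-M) * ∫ r in (1/2:ℝ)..1, p r ≤ C * ∫ r in (1/2:ℝ)..1, f r * p r := by
    rw [← intervalIntegral.integral_const_mul, ← intervalIntegral.integral_const_mul]
    apply intervalIntegral.integral_mono_on (by norm_num : (1/2:ℝ) ≤ 1)
      (hp_half'.const_mul _) (hfp2.const_mul _)
    intro x hx
    have hpx : 0 ≤ p x := hp0 x ⟨by linarith [hx.1], hx.2⟩
    have hgx : C * f x = - g x := by simp [hfdef, hgdef, hCdef]; ring
    have h2 := mul_le_mul_of_nonneg_right (hMle x hx) hpx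
    calc (-M) * p x ≤ -(g x * p x) := by linarith
    _ = C * f x * p x := by rw [hgx]; ring
    _ = C * (f x * p x) := by ring
  -- splitting the main integral
  have hsplitfp : (∫ r in (0:ℝ)..(1/2), f r * p r) + ∫ r in (1/2:ℝ)..1, f r * p r
      = ∫ r in (0:ℝ)..1, f r * p r :=
    intervalIntegral.integral_add_adjacent_intervals hfp1 hfp2
  have hkey := key_int n m hmn
  -- assemble
  have s1 : a * (∫ r in (0:ℝ)..1, f r) ≤ a * ∫ r in (0:ℝ)..(1/2), f r :=
    mul_le_mul_of_nonneg_left h1 ha0.le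
  have s2 : C * (a * ∫ r in (0:ℝ)..(1/2), f r) ≤ C * ∫ r in (0:ℝ)..(1/2), f r * p r :=
    mul_le_mul_of_nonneg_left hA hC0
  have s2' : C * (a * (∫ r in (0:ℝ)..1, f r)) ≤ C * (a * ∫ r in (0:ℝ)..(1/2), f r) :=
    mul_le_mul_of_nonneg_left s1 hC0
  have s3 : (-M) * (1 - a/2) ≤ (-M) * ∫ r in (1/2:ℝ)..1, p r := by
    have := mul_le_mul_of_nonneg_left hp2 hM0
    linarith
  have hcast : ((2 * (m : ℤ) - (n : ℤ) : ℤ) : ℝ) = 2 * (m:ℝ) - n := by push_cast; ring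
  rw [ge_iff_le, hcast]
  have hKeq : a * ((2 * (m:ℝ) - n) / (2 * ((n:ℝ) + 1) * ((n:ℝ) + 2)))
      = C * (a * (∫ r in (0:ℝ)..1, f r)) := by rw [← hkey]; ring
  have hfinal : C * (∫ r in (0:ℝ)..1, f r * p r)
      = C * (∫ r in (0:ℝ)..(1/2), f r * p r) + C * ∫ r in (1/2:ℝ)..1, f r * p r := by
    rw [← hsplitfp]; ring
  calc a * (2 * (m:ℝ) - n) / (2 * ((n:ℝ) + 1) * ((n:ℝ) + 2)) - M * (1 - a/2)
      = a * ((2 * (m:ℝ) - n) / (2 * ((n:ℝ) + 1) * ((n:ℝ) + 2))) + (-M) * (1 - a/2) := by ring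
    _ ≤ C * (∫ r in (0:ℝ)..(1/2), f r * p r) + C * ∫ r in (1/2:ℝ)..1, f r * p r := by
        rw [hKeq]
        have := le_trans s2' s2
        linarith [le_trans s3 hB]
    _ = C * ∫ r in (0:ℝ)..1, f r * p r := hfinal.symm
end

section
/- Let α be a type with decidable equality and let S, S′ : List α be lists such that S has no duplicate elements, S′ has no duplicate elements, and for all x, y, if [x, y] is a sublist of S and x ∈ S′ and y ∈ S′, then [x, y] is a sublist of S′ (common elements appear in the same relative order). Let L = S.filter (· ∈ S′), the list of elements of S that also occur in S′, in the order they occur in S. Then: (i) L is a sublist of S and of S′; and (ii) every list T that is simultaneously a sublist of S and of S′ has length at most the length of L, which equals the number of common elements of S and S′. In particular, L is a longest common subsequence of S and S′. -/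
lemma stmt_14_aux {α : Type*} (S : List α) (hS : S.Nodup) :
    ∀ S' : List α, S'.Nodup →
      (∀ x y : α, [x, y].Sublist S → x ∈ S' → y ∈ S' → [x, y].Sublist S') →
      ∀ T : List α, T.Sublist S → (∀ x ∈ T, x ∈ S') → T.Sublist S' := by
  intro S'
  induction S' with
  | nil =>
    intro _ _ T hT hmem
    cases T with
    | nil => simp
    | cons a T => exact absurd (hmem a (by simp)) (by simp)
  | cons c S'' ih =>
    intro hnd horder T hTS hmem
    cases T with
    | nil => simp
    | cons a T' =>
      have hTnd : (a :: T').Nodup := hTS.nodup hS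
      have hT'S : T'.Sublist S := (List.sublist_cons_self a T').trans hTS
      by_cases hac : a = c
      · subst hac
        apply List.Sublist.cons₂
        refine ih hnd.of_cons ?_ T' hT'S ?_
        · intro x y hxy hx hy
          have h := horder x y hxy (List.mem_cons_of_mem _ hx) (List.mem_cons_of_mem _ hy)
          cases h with
          | cons _ h' => exact h'
          | cons_cons h' => exact absurd hx (List.nodup_cons.mp hnd).1
        · intro x hx
          have hxa : x ≠ a := fun h => (List.nodup_cons.mp hTnd).1 (h ▸ hx)
          have := hmem x (List.mem_cons_of_mem _ hx)
          rcases List.mem_cons.mp this with h | h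
          · exact absurd h hxa
          · exact h
      · apply List.Sublist.cons
        refine ih hnd.of_cons ?_ (a :: T') hTS ?_
        · intro x y hxy hx hy
          have h := horder x y hxy (List.mem_cons_of_mem _ hx) (List.mem_cons_of_mem _ hy)
          cases h with
          | cons _ h' => exact h'
          | cons_cons h' => exact absurd hx (List.nodup_cons.mp hnd).1
        · intro x hx
          rcases List.mem_cons.mp hx with rfl | hx'
          · rcases List.mem_cons.mp (hmem x (List.mem_cons_self)) with rfl | h
            · exact absurd rfl hac
            · exact h
          · rcases List.mem_cons.mp (hmem x (List.mem_cons_of_mem _ hx')) with rfl | h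
            · -- x = c : contradiction via order
              have hax : [a, x].Sublist S := by
                refine List.Sublist.trans ?_ hTS
                exact List.cons_sublist_cons.mpr (List.singleton_sublist.mpr hx')
              have h := horder a x hax (hmem a (List.mem_cons_self))
                (hmem x (List.mem_cons_of_mem _ hx'))
              cases h with
              | cons _ h' =>
                exact absurd (h'.subset (by simp)) (List.nodup_cons.mp hnd).1
              | cons_cons h' => exact absurd rfl hac
            · exact h


/-- Let `S`, `S′` be duplicate-free lists such that any two
elements common to both appear in the same relative order in each, and let
`L = S.filter (· ∈ S′)`. Then `L` is a sublist of `S` and of `S′`, every common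
sublist `T` of `S` and `S′` has length at most that of `L`, and the length of
`L` equals the number of common elements of `S` and `S′`. In particular `L` is
a longest common subsequence of `S` and `S′`. -/
theorem stmt_14 {α : Type*} [DecidableEq α] (S S' : List α)
    (hS : S.Nodup) (hS' : S'.Nodup)
    (horder : ∀ x y : α, [x, y].Sublist S → x ∈ S' → y ∈ S' → [x, y].Sublist S') :
    (S.filter (· ∈ S')).Sublist S ∧
      (S.filter (· ∈ S')).Sublist S' ∧
      (∀ T : List α, T.Sublist S → T.Sublist S' →
        T.length ≤ (S.filter (· ∈ S')).length) ∧
      (S.filter (· ∈ S')).length = (S.toFinset ∩ S'.toFinset).card := by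
  have hsub : (S.filter (· ∈ S')).Sublist S := List.filter_sublist
  have hmemL : ∀ x ∈ S.filter (· ∈ S'), x ∈ S' := by
    intro x hx
    simpa using (List.mem_filter.mp hx).2
  have hsub' : (S.filter (· ∈ S')).Sublist S' :=
    stmt_14_aux S hS S' hS' horder _ hsub hmemL
  refine ⟨hsub, hsub', ?_, ?_⟩
  · intro T hTS hTS'
    have : T.filter (· ∈ S') = T := by
      apply List.filter_eq_self.mpr
      intro x hx
      simpa using hTS'.subset hx
    calc T.length = (T.filter (· ∈ S')).length := by rw [this]
      _ ≤ (S.filter (· ∈ S')).length := (hTS.filter _).length_le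
  · have hndL : (S.filter (· ∈ S')).Nodup := hS.filter _
    rw [← List.toFinset_card_of_nodup hndL]
    congr 1
    ext x
    simp [List.mem_filter]
end

section
/- Let α be a type with decidable equality and let S, S′ : List α be lists such that S has no duplicate elements, S′ has no duplicate elements, and for all x, y, if [x, y] is a sublist of S and x ∈ S′ and y ∈ S′, then [x, y] is a sublist of S′. Let L = S.filter (· ∈ S′). Then the longest common subsequence of S and S′ is unique: every list T that is a sublist of both S and S′ and has length equal to the length of L satisfies T = L. -/
/-- Let `S`, `S′` be duplicate-free lists such that any two
elements common to both appear in the same relative order in each, and let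
`L = S.filter (· ∈ S′)`. Then the longest common subsequence of `S` and `S′`
is unique: any common sublist `T` of `S` and `S′` whose length equals that of
`L` satisfies `T = L`. -/
theorem stmt_15 {α : Type*} [DecidableEq α] (S S' : List α)
    (hS : S.Nodup) (hS' : S'.Nodup)
    (horder : ∀ x y : α, [x, y].Sublist S → x ∈ S' → y ∈ S' → [x, y].Sublist S')
    (T : List α) (hTS : T.Sublist S) (hTS' : T.Sublist S')
    (hlen : T.length = (S.filter (· ∈ S')).length) :
    T = S.filter (· ∈ S') := by
  have h1 : T.filter (· ∈ S') = T := by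
    apply List.filter_eq_self.mpr
    intro a ha
    simpa using hTS'.subset ha
  have h2 : T.Sublist (S.filter (· ∈ S')) := by
    simpa [h1] using hTS.filter (· ∈ S')
  exact h2.eq_of_length hlen
end
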